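/- arXiv:1912.00886 — 6 statements merged into one kernel-verified Lean document; each statement's English description precedes it below -/
import Mathlib

section
/- Let M be a compact connected metrizable space without cut points, and let {ζ,ξ} be a cut pair of M (i.e., M \ {ζ,ξ} is disconnected but neither ζ nor ξ is a cut point). If {σ,τ} is another cut pair disjoint from {ζ,ξ} whose complement M \ {σ,τ} has at least three connected components, then σ and τ lie in the same connected component of M \ {ζ,ξ}. -/
/-- A cut point of a topological space: a point whose complement is disconnected. -/
def IsCutPoint (M : Type*) [TopologicalSpace M] (η : M) : Prop :=
  ¬ IsPreconnected ({η}ᶜ : Set M)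

/-- A cut pair: two distinct points whose complement is disconnected, neither being a cut point. -/
def IsCutPair (M : Type*) [TopologicalSpace M] (ζ ξ : M) : Prop :=
  ζ ≠ ξ ∧ ¬ IsPreconnected (({ζ, ξ} : Set M)ᶜ) ∧ ¬ IsCutPoint M ζ ∧ ¬ IsCutPoint M ξ

open Set

section Aux

variable {M : Type*} [TopologicalSpace M]

/-- Lemma A: if `A ⊔ B` is a separation of the complement of `{σ, τ}` and `τ` is not a cut
point, then `σ` is in the closure of `A`. -/
lemma sep_mem_closure {σ τ : M} (hτ : ¬ IsCutPoint M τ) (hστ : σ ≠ τ)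
    {A B : Set M} (hAo : IsOpen A) (hBo : IsOpen B) (hAB : A ∩ B = ∅)
    (hU : A ∪ B = ({σ, τ} : Set M)ᶜ) (hAne : A.Nonempty) : σ ∈ closure A := by
  by_contra hσ
  have hAV : A ⊆ ({σ, τ} : Set M)ᶜ := hU ▸ subset_union_left
  have hclA : closure A ∩ B = ∅ := by
    have := hBo.inter_closure (t := A)
    rw [inter_comm A B] at hAB
    rw [hAB, closure_empty] at this
    exact eq_empty_of_subset_empty (by rw [inter_comm]; exact this)
  have hcl : closure A ⊆ A ∪ {τ} := by
    intro x hx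
    have hxB : x ∉ B := fun hxB => (by rw [← hclA]; exact ⟨hx, hxB⟩ : x ∈ (∅ : Set M)).elim
    have hxσ : x ≠ σ := fun h => hσ (h ▸ hx)
    by_cases hxA : x ∈ A
    · exact Or.inl hxA
    · have : x ∉ ({σ, τ} : Set M)ᶜ := fun h => by
        rw [← hU] at h; rcases h with h | h
        exacts [hxA h, hxB h]
      simp only [mem_compl_iff, not_not, mem_insert_iff, mem_singleton_iff] at this
      rcases this with h | h
      exacts [absurd h hxσ, Or.inr (by simp [h])]
  apply hτ
  intro hpre
  have := hpre A (closure A)ᶜ hAo (isClosed_closure.isOpen_compl) ?_ ?_ ?_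
  · obtain ⟨x, _, hx1, hx2⟩ := this
    exact hx2 (subset_closure hx1)
  · intro x hx
    by_cases hxc : x ∈ closure A
    · rcases hcl hxc with h | h
      · exact Or.inl h
      · exact absurd (by simpa using h) (by simpa using hx)
    · exact Or.inr hxc
  · obtain ⟨x, hx⟩ := hAne
    exact ⟨x, fun h => (hAV hx) (by simp [h] : x ∈ ({σ, τ} : Set M)), hx⟩
  · exact ⟨σ, fun h => hστ (by simpa using h), hσ⟩

/-- Lemma B: if `A ⊔ B` is a separation of the complement of `{σ, τ}` in a connected space
without cut points, then `A ∪ {σ, τ}` is preconnected. -/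
lemma sep_union_preconnected [ConnectedSpace M] (hnocut : ∀ η : M, ¬ IsCutPoint M η)
    {σ τ : M} (hστ : σ ≠ τ) {A B : Set M} (hAo : IsOpen A) (hBo : IsOpen B)
    (hAB : A ∩ B = ∅) (hU : A ∪ B = ({σ, τ} : Set M)ᶜ) (hAne : A.Nonempty)
    (hBne : B.Nonempty) : IsPreconnected (A ∪ {σ, τ}) := by
  have hAV : A ⊆ ({σ, τ} : Set M)ᶜ := hU ▸ subset_union_left
  have hBV : B ⊆ ({σ, τ} : Set M)ᶜ := hU ▸ subset_union_right
  have hσA : σ ∈ closure A := sep_mem_closure (hnocut τ) hστ hAo hBo hAB hU hAne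
  have hτA : τ ∈ closure A := by
    refine sep_mem_closure (hnocut σ) hστ.symm hAo hBo hAB ?_ hAne
    rw [hU, Set.pair_comm]
  set T : Set M := A ∪ {σ, τ} with hT
  have hTB : T = Bᶜ := by
    ext x
    simp only [hT, mem_union, mem_compl_iff]
    constructor
    · rintro (h | h)
      · exact fun hB => (by rw [← hAB]; exact ⟨h, hB⟩ : x ∈ (∅ : Set M)).elim
      · exact fun hB => (hBV hB) h
    · intro hB
      by_cases h : x ∈ ({σ, τ} : Set M)
      · exact Or.inr h
      · left
        have : x ∈ A ∪ B := by rw [hU]; exact h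
        rcases this with h' | h'
        exacts [h', absurd h' hB]
  have hTc : IsClosed T := by rw [hTB]; exact hBo.isClosed_compl
  have hσT : σ ∈ T := Or.inr (by simp)
  have hτT : τ ∈ T := Or.inr (by simp)
  by_contra hnp
  rw [IsPreconnected] at hnp
  push_neg at hnp
  obtain ⟨u, v, hu, hv, huv, hTu, hTv, hemp⟩ := hnp
  set F : Set M := T ∩ u with hF
  set G : Set M := T ∩ v with hG
  have hFG : F ∩ G = ∅ := by
    apply eq_empty_of_subset_empty
    intro x ⟨⟨hxT, hxu⟩, _, hxv⟩
    rw [← hemp]; exact ⟨hxT, hxu, hxv⟩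
  have hFv : F = T ∩ vᶜ := by
    ext x
    constructor
    · rintro ⟨hxT, hxu⟩
      exact ⟨hxT, fun hxv => (by rw [← hemp]; exact ⟨hxT, hxu, hxv⟩ : x ∈ (∅ : Set M)).elim⟩
    · rintro ⟨hxT, hxv⟩
      rcases huv hxT with h | h
      exacts [⟨hxT, h⟩, absurd h hxv]
  have hGu : G = T ∩ uᶜ := by
    ext x
    constructor
    · rintro ⟨hxT, hxv⟩
      exact ⟨hxT, fun hxu => (by rw [← hemp]; exact ⟨hxT, hxu, hxv⟩ : x ∈ (∅ : Set M)).elim⟩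
    · rintro ⟨hxT, hxu⟩
      rcases huv hxT with h | h
      exacts [absurd h hxu, ⟨hxT, h⟩]
  have hFc : IsClosed F := by rw [hFv]; exact hTc.inter (isClosed_compl_iff.mpr hv)
  have hGc : IsClosed G := by rw [hGu]; exact hTc.inter (isClosed_compl_iff.mpr hu)
  have hFGT : F ∪ G = T := by
    apply Subset.antisymm (union_subset inter_subset_left inter_subset_left)
    intro x hxT
    rcases huv hxT with h | h
    exacts [Or.inl ⟨hxT, h⟩, Or.inr ⟨hxT, h⟩]
  have hσFG : σ ∈ F ∨ σ ∈ G := by rw [← mem_union, hFGT]; exact hσT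
  have hτFG : τ ∈ F ∨ τ ∈ G := by rw [← mem_union, hFGT]; exact hτT
  have hσA' : σ ∉ A := fun h => hAV h (by simp)
  have hτA' : τ ∉ A := fun h => hAV h (by simp)
  -- helper: a nonempty clopen subset of A contradicts connectedness
  have clopen_contra : ∀ (H : Set M), IsOpen H → IsClosed H → H.Nonempty → H ⊆ A → False := by
    intro H hHo hHc hHne hHA
    have := (isPreconnected_univ (α := M)) H Hᶜ hHo hHc.isOpen_compl
      (by intro x _; exact (em (x ∈ H)).imp id id)
      (by obtain ⟨x, hx⟩ := hHne; exact ⟨x, trivial, hx⟩)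
      ⟨σ, trivial, fun h => hσA' (hHA h)⟩
    obtain ⟨x, _, hx1, hx2⟩ := this
    exact hx2 hx1
  -- helper: if σ and τ lie in different pieces, we get a cut point
  have cut_contra : ∀ (w : Set M) (Fw : Set M), IsOpen w → Fw = T ∩ w → IsClosed Fw →
      σ ∈ Fw → σ ∈ w → τ ∉ Fw → False := by
    intro w Fw hw hFw hFwc hσFw hσw hτFw
    -- A ∩ w is nonempty since σ ∈ closure A
    have hAw : (A ∩ w).Nonempty := by
      rcases mem_closure_iff.mp hσA w hw hσw with ⟨y, hy1, hy2⟩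
      exact ⟨y, hy2, hy1⟩
    have hAwF : A ∩ w ⊆ Fw := by
      rintro x ⟨hxA, hxw⟩; rw [hFw]; exact ⟨Or.inl hxA, hxw⟩
    have hFsub : Fw ⊆ (A ∩ w) ∪ {σ} := by
      intro x hx
      rw [hFw] at hx
      obtain ⟨hxT, hxw⟩ := hx
      rcases hxT with h | h
      · exact Or.inl ⟨h, hxw⟩
      · rcases h with h | h
        · exact Or.inr (by simpa using h)
        · simp only [mem_singleton_iff] at h
          exact (hτFw (by rw [hFw]; exact ⟨hτT, h ▸ hxw⟩)).elim
    apply hnocut σ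
    intro hpre
    have := hpre (A ∩ w) Fwᶜ (hAo.inter hw) hFwc.isOpen_compl ?_ ?_ ?_
    · obtain ⟨x, _, hx1, hx2⟩ := this
      exact hx2 (hAwF hx1)
    · intro x hx
      simp only [mem_compl_iff, mem_singleton_iff] at hx
      by_cases hxF : x ∈ Fw
      · rcases hFsub hxF with h | h
        · exact Or.inl h
        · exact absurd (by simpa using h) hx
      · exact Or.inr hxF
    · obtain ⟨y, hy⟩ := hAw
      exact ⟨y, fun h => hσA' ((show y = σ by simpa using h) ▸ hy.1), hy⟩
    · exact ⟨τ, fun h => hστ (show τ = σ by simpa using h).symm, hτFw⟩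
  rcases hσFG with hσF | hσG <;> rcases hτFG with hτF | hτG
  · -- both in F : G is a nonempty clopen subset of A
    have hGA : G ⊆ A := by
      intro x hx
      have hxT := hx.1
      rcases hxT with h | h
      · exact h
      · exfalso
        rcases h with h | h
        · subst h
          exact (by rw [← hFG]; exact ⟨hσF, hx⟩ : x ∈ (∅ : Set M)).elim
        · simp only [mem_singleton_iff] at h
          subst h
          exact (by rw [← hFG]; exact ⟨hτF, hx⟩ : x ∈ (∅ : Set M)).elim
    have hGo : IsOpen G := by
      have : G = A ∩ v := by
        apply Subset.antisymm
        · intro x hx; exact ⟨hGA hx, hx.2⟩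
        · rintro x ⟨hxA, hxv⟩; exact ⟨Or.inl hxA, hxv⟩
      rw [this]; exact hAo.inter hv
    exact clopen_contra G hGo hGc hTv hGA
  · -- σ ∈ F, τ ∈ G
    have hτF : τ ∉ F := fun h => (by rw [← hFG]; exact ⟨h, hτG⟩ : τ ∈ (∅ : Set M)).elim
    exact cut_contra u F hu hF hFc hσF hσF.2 hτF
  · -- σ ∈ G, τ ∈ F
    have hτG' : τ ∉ G := fun h => (by rw [← hFG]; exact ⟨hτF, h⟩ : τ ∈ (∅ : Set M)).elim
    exact cut_contra v G hv hG hGc hσG hσG.2 hτG'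
  · -- both in G : F is a nonempty clopen subset of A
    have hFA : F ⊆ A := by
      intro x hx
      have hxT := hx.1
      rcases hxT with h | h
      · exact h
      · exfalso
        rcases h with h | h
        · subst h
          exact (by rw [← hFG]; exact ⟨hx, hσG⟩ : x ∈ (∅ : Set M)).elim
        · simp only [mem_singleton_iff] at h
          subst h
          exact (by rw [← hFG]; exact ⟨hx, hτG⟩ : x ∈ (∅ : Set M)).elim
    have hFo : IsOpen F := by
      have : F = A ∩ u := by
        apply Subset.antisymm
        · intro x hx; exact ⟨hFA hx, hx.2⟩
        · rintro x ⟨hxA, hxu⟩; exact ⟨Or.inl hxA, hxu⟩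
      rw [this]; exact hAo.inter hu
    exact clopen_contra F hFo hFc hTu hFA

/-- Lemma C: if `A ⊔ B` is a separation of the complement of `{σ, τ}` with `ζ, ξ ∈ B`,
then `σ` and `τ` are in the same connected component of the complement of `{ζ, ξ}`. -/
lemma sep_same_component [ConnectedSpace M] (hnocut : ∀ η : M, ¬ IsCutPoint M η)
    {σ τ : M} (hστ : σ ≠ τ) {A B : Set M} (hAo : IsOpen A) (hBo : IsOpen B)
    (hAB : A ∩ B = ∅) (hU : A ∪ B = ({σ, τ} : Set M)ᶜ) (hAne : A.Nonempty)
    (hBne : B.Nonempty) {ζ ξ : M} (hζ : ζ ∈ B) (hξ : ξ ∈ B)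
    (hσ : σ ∉ ({ζ, ξ} : Set M)) (hτ : τ ∉ ({ζ, ξ} : Set M)) :
    connectedComponentIn (({ζ, ξ} : Set M)ᶜ) σ = connectedComponentIn (({ζ, ξ} : Set M)ᶜ) τ := by
  have hpre := sep_union_preconnected hnocut hστ hAo hBo hAB hU hAne hBne
  have hsub : A ∪ {σ, τ} ⊆ ({ζ, ξ} : Set M)ᶜ := by
    rintro x (hx | hx)
    · intro hc
      rcases hc with h | h
      · exact (by rw [← hAB]; exact ⟨hx, (by simpa using h : x = ζ) ▸ hζ⟩ : x ∈ (∅ : Set M)).elim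
      · simp only [mem_singleton_iff] at h
        exact (by rw [← hAB]; exact ⟨hx, h ▸ hξ⟩ : x ∈ (∅ : Set M)).elim
    · rcases hx with h | h
      · exact (by simpa using h : x = σ) ▸ hσ
      · exact (by simpa using h : x = τ) ▸ hτ
  have hσm : σ ∈ A ∪ {σ, τ} := Or.inr (by simp)
  have hτm : τ ∈ A ∪ {σ, τ} := Or.inr (by simp)
  have := hpre.subset_connectedComponentIn hσm hsub
  exact connectedComponentIn_eq (this hτm)

/-- Lemma D: refine a separation so that two given points on opposite sides end up
on the same side, given that the side of the first point is disconnected. -/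
lemma sep_refine {V A B : Set M} (hAo : IsOpen A) (hBo : IsOpen B) (hAB : A ∩ B = ∅)
    (hU : A ∪ B = V) {p q : M} (hp : p ∈ A) (hq : q ∈ B)
    (hA2 : ¬ IsPreconnected A) :
    ∃ A' B' : Set M, IsOpen A' ∧ IsOpen B' ∧ A' ∩ B' = ∅ ∧ A' ∪ B' = V ∧
      A'.Nonempty ∧ B'.Nonempty ∧ p ∈ B' ∧ q ∈ B' := by
  rw [IsPreconnected] at hA2
  push_neg at hA2
  obtain ⟨u, v, hu, hv, huv, hAu, hAv, hemp⟩ := hA2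
  have hdisj : (A ∩ u) ∩ (A ∩ v) = ∅ := by
    apply eq_empty_of_subset_empty
    rintro x ⟨⟨hxA, hxu⟩, _, hxv⟩
    rw [← hemp]; exact ⟨hxA, hxu, hxv⟩
  have hsplit : (A ∩ u) ∪ (A ∩ v) = A := by
    apply Subset.antisymm (union_subset inter_subset_left inter_subset_left)
    intro x hx
    rcases huv hx with h | h
    exacts [Or.inl ⟨hx, h⟩, Or.inr ⟨hx, h⟩]
  rcases (show p ∈ (A ∩ u) ∪ (A ∩ v) by rw [hsplit]; exact hp) with hpu | hpv
  · refine ⟨A ∩ v, (A ∩ u) ∪ B, hAo.inter hv, (hAo.inter hu).union hBo, ?_, ?_, hAv, ?_,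
      Or.inl hpu, Or.inr hq⟩
    · apply eq_empty_of_subset_empty
      rintro x ⟨hx1, hx2⟩
      rcases hx2 with h | h
      · rw [← hdisj]; exact ⟨h, hx1⟩
      · rw [← hAB]; exact ⟨hx1.1, h⟩
    · rw [← hU, ← hsplit]
      ext y
      simp only [mem_union, mem_inter_iff]
      tauto
    · exact ⟨p, Or.inl hpu⟩
  · refine ⟨A ∩ u, (A ∩ v) ∪ B, hAo.inter hu, (hAo.inter hv).union hBo, ?_, ?_, hAu, ?_,
      Or.inl hpv, Or.inr hq⟩
    · apply eq_empty_of_subset_empty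
      rintro x ⟨hx1, hx2⟩
      rcases hx2 with h | h
      · rw [← hdisj]; exact ⟨hx1, h⟩
      · rw [← hAB]; exact ⟨hx1.1, h⟩
    · rw [← hU, ← hsplit]
      ext y
      simp only [mem_union, mem_inter_iff]
      tauto
    · exact ⟨p, Or.inl hpv⟩

end Aux

theorem stmt0 {M : Type*} [TopologicalSpace M] [CompactSpace M] [ConnectedSpace M]
    [TopologicalSpace.MetrizableSpace M]
    (hnocut : ∀ η : M, ¬ IsCutPoint M η)
    (ζ ξ σ τ : M)
    (hζξ : IsCutPair M ζ ξ) (hστ : IsCutPair M σ τ)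
    (hdisj : ({σ, τ} : Set M) ∩ ({ζ, ξ} : Set M) = ∅)
    (hthree : ∃ a b c : M, a ∈ (({σ, τ} : Set M)ᶜ) ∧ b ∈ (({σ, τ} : Set M)ᶜ) ∧
      c ∈ (({σ, τ} : Set M)ᶜ) ∧
      connectedComponentIn (({σ, τ} : Set M)ᶜ) a ≠ connectedComponentIn (({σ, τ} : Set M)ᶜ) b ∧
      connectedComponentIn (({σ, τ} : Set M)ᶜ) a ≠ connectedComponentIn (({σ, τ} : Set M)ᶜ) c ∧
      connectedComponentIn (({σ, τ} : Set M)ᶜ) b ≠ connectedComponentIn (({σ, τ} : Set M)ᶜ) c) :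
    connectedComponentIn (({ζ, ξ} : Set M)ᶜ) σ = connectedComponentIn (({ζ, ξ} : Set M)ᶜ) τ := by
  classical
  obtain ⟨a, b, c, ha, hb, hc, hab, hac, hbc⟩ := hthree
  set V : Set M := ({σ, τ} : Set M)ᶜ with hV
  have hVo : IsOpen V := (Set.toFinite ({σ, τ} : Set M)).isClosed.isOpen_compl
  have hστne : σ ≠ τ := hστ.1
  -- ζ, ξ ∈ V and σ, τ ∉ {ζ, ξ}
  have hζV : ζ ∈ V := fun h => (by rw [← hdisj]; exact ⟨h, by simp⟩ : ζ ∈ (∅ : Set M)).elim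
  have hξV : ξ ∈ V := fun h => (by rw [← hdisj]; exact ⟨h, by simp⟩ : ξ ∈ (∅ : Set M)).elim
  have hσζξ : σ ∉ ({ζ, ξ} : Set M) := fun h =>
    (by rw [← hdisj]; exact ⟨by simp, h⟩ : σ ∈ (∅ : Set M)).elim
  have hτζξ : τ ∉ ({ζ, ξ} : Set M) := fun h =>
    (by rw [← hdisj]; exact ⟨by simp, h⟩ : τ ∈ (∅ : Set M)).elim
  -- at most one of the three components contains ζ, and likewise ξ; pick a free one
  have atmost : ∀ y z : M, ζ ∈ connectedComponentIn V y → ζ ∈ connectedComponentIn V z →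
      connectedComponentIn V y = connectedComponentIn V z := fun y z h1 h2 =>
    (connectedComponentIn_eq h1).trans (connectedComponentIn_eq h2).symm
  have atmost' : ∀ y z : M, ξ ∈ connectedComponentIn V y → ξ ∈ connectedComponentIn V z →
      connectedComponentIn V y = connectedComponentIn V z := fun y z h1 h2 =>
    (connectedComponentIn_eq h1).trans (connectedComponentIn_eq h2).symm
  have pick : ∃ x : M, x ∈ V ∧ ζ ∉ connectedComponentIn V x ∧ ξ ∉ connectedComponentIn V x := by
    by_cases h1 : ζ ∈ connectedComponentIn V a ∨ ξ ∈ connectedComponentIn V a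
    · by_cases h2 : ζ ∈ connectedComponentIn V b ∨ ξ ∈ connectedComponentIn V b
      · refine ⟨c, hc, ?_, ?_⟩
        · intro hζc
          rcases h1 with h | h
          · exact hac (atmost a c h hζc)
          · rcases h2 with h' | h'
            · exact hbc (atmost b c h' hζc)
            · exact hab (atmost' a b h h')
        · intro hξc
          rcases h1 with h | h
          · rcases h2 with h' | h'
            · exact hab (atmost a b h h')
            · exact hbc (atmost' b c h' hξc)
          · exact hac (atmost' a c h hξc)
      · push_neg at h2
        exact ⟨b, hb, h2.1, h2.2⟩
    · push_neg at h1
      exact ⟨a, ha, h1.1, h1.2⟩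
  obtain ⟨x, hxV, hζx, hξx⟩ := pick
  -- initial separation of V
  have hVd : ¬ IsPreconnected V := hστ.2.1
  rw [IsPreconnected] at hVd
  push_neg at hVd
  obtain ⟨u, v, hu, hv, huv, hVu, hVv, hemp⟩ := hVd
  set A₀ : Set M := V ∩ u with hA₀
  set B₀ : Set M := V ∩ v with hB₀
  have hA₀o : IsOpen A₀ := hVo.inter hu
  have hB₀o : IsOpen B₀ := hVo.inter hv
  have hdisj0 : A₀ ∩ B₀ = ∅ := by
    apply eq_empty_of_subset_empty
    rintro y ⟨⟨hyV, hyu⟩, _, hyv⟩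
    rw [← hemp]; exact ⟨hyV, hyu, hyv⟩
  have hU0 : A₀ ∪ B₀ = V := by
    apply Subset.antisymm (union_subset inter_subset_left inter_subset_left)
    intro y hy
    rcases huv hy with h | h
    exacts [Or.inl ⟨hy, h⟩, Or.inr ⟨hy, h⟩]
  have hU0' : A₀ ∪ B₀ = ({σ, τ} : Set M)ᶜ := hU0.trans hV
  have hU0'' : B₀ ∪ A₀ = ({σ, τ} : Set M)ᶜ := (union_comm B₀ A₀).trans hU0'
  -- helper: a side containing x and a point not in x's component is disconnected
  have not_pre : ∀ (s : Set M) (p : M), s ⊆ V → x ∈ s → p ∈ s →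
      p ∉ connectedComponentIn V x → ¬ IsPreconnected s := by
    intro s p hsV hxs hps hpx hpre
    exact hpx (hpre.subset_connectedComponentIn hxs hsV hps)
  have hζ0 : ζ ∈ A₀ ∨ ζ ∈ B₀ := by rw [← mem_union, hU0]; exact hζV
  have hξ0 : ξ ∈ A₀ ∨ ξ ∈ B₀ := by rw [← mem_union, hU0]; exact hξV
  have hx0 : x ∈ A₀ ∨ x ∈ B₀ := by rw [← mem_union, hU0]; exact hxV
  rcases hζ0 with hζ0 | hζ0 <;> rcases hξ0 with hξ0 | hξ0
  · -- both in A₀ : use B₀ as the connected-glue side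
    exact sep_same_component hnocut hστne hB₀o hA₀o (by rw [inter_comm]; exact hdisj0)
      ((union_comm B₀ A₀).trans hU0 |>.trans hV) hVv hVu hζ0 hξ0 hσζξ hτζξ
  · -- ζ ∈ A₀, ξ ∈ B₀
    rcases hx0 with hx0 | hx0
    · have hnp : ¬ IsPreconnected A₀ :=
        not_pre A₀ ζ (hU0 ▸ subset_union_left) hx0 hζ0 hζx
      obtain ⟨A', B', hA'o, hB'o, hAB', hU', hA'ne, _, hζ', hξ'⟩ :=
        sep_refine hA₀o hB₀o hdisj0 hU0' hζ0 hξ0 hnp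
      exact sep_same_component hnocut hστne hA'o hB'o hAB' hU' hA'ne
        ⟨ζ, hζ'⟩ hζ' hξ' hσζξ hτζξ
    · have hnp : ¬ IsPreconnected B₀ :=
        not_pre B₀ ξ (hU0 ▸ subset_union_right) hx0 hξ0 hξx
      obtain ⟨A', B', hA'o, hB'o, hAB', hU', hA'ne, _, hξ', hζ'⟩ :=
        sep_refine hB₀o hA₀o (by rw [inter_comm]; exact hdisj0) hU0''
          hξ0 hζ0 hnp
      exact sep_same_component hnocut hστne hA'o hB'o hAB' hU' hA'ne
        ⟨ζ, hζ'⟩ hζ' hξ' hσζξ hτζξ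
  · -- ξ ∈ A₀, ζ ∈ B₀
    rcases hx0 with hx0 | hx0
    · have hnp : ¬ IsPreconnected A₀ :=
        not_pre A₀ ξ (hU0 ▸ subset_union_left) hx0 hξ0 hξx
      obtain ⟨A', B', hA'o, hB'o, hAB', hU', hA'ne, _, hξ', hζ'⟩ :=
        sep_refine hA₀o hB₀o hdisj0 hU0' hξ0 hζ0 hnp
      exact sep_same_component hnocut hστne hA'o hB'o hAB' hU' hA'ne
        ⟨ζ, hζ'⟩ hζ' hξ' hσζξ hτζξ
    · have hnp : ¬ IsPreconnected B₀ :=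
        not_pre B₀ ζ (hU0 ▸ subset_union_right) hx0 hζ0 hζx
      obtain ⟨A', B', hA'o, hB'o, hAB', hU', hA'ne, _, hζ', hξ'⟩ :=
        sep_refine hB₀o hA₀o (by rw [inter_comm]; exact hdisj0) hU0''
          hζ0 hξ0 hnp
      exact sep_same_component hnocut hστne hA'o hB'o hAB' hU' hA'ne
        ⟨ζ, hζ'⟩ hζ' hξ' hσζξ hτζξ
  · -- both in B₀ : use A₀
    exact sep_same_component hnocut hστne hA₀o hB₀o hdisj0 (hU0.trans hV)
      hVu hVv hζ0 hξ0 hσζξ hτζξ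
end

section
/- Let M be a compact connected metrizable space without cut points. Suppose {σ,τ} is a cut pair such that M \ {σ,τ} has at least three connected components, and {ζ,ξ} is any other cut pair disjoint from {σ,τ}. Then ζ and ξ lie in the same connected component of M \ {σ,τ}. -/
section Aux

variable {M : Type*} [TopologicalSpace M] [T1Space M] [ConnectedSpace M]

lemma aux_pair_closed (y z : M) : IsClosed ({y, z} : Set M) :=
  Set.Finite.isClosed (Set.Finite.insert y (Set.finite_singleton z))

/-- A nonempty open set with closure contained in itself which misses a point is absurd
in a connected space. -/
lemma aux_clopen_false {S : Set M} (hSo : IsOpen S) (hcl : closure S ⊆ S)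
    (hne : S.Nonempty) {x : M} (hx : x ∉ S) : False := by
  have hclopen : IsClopen S := ⟨isClosed_of_closure_subset hcl, hSo⟩
  rcases isClopen_iff.mp hclopen with h | h
  · exact hne.ne_empty h
  · exact hx (by rw [h]; trivial)

/-- A nonempty open set whose closure adds at most the point η, missing some other
point η', witnesses that η is a cut point. -/
lemma aux_cut {S : Set M} {η η' : M} (hSo : IsOpen S) (hSne : S.Nonempty)
    (hcl : closure S ⊆ S ∪ {η}) (hηS : η ∉ S) (hη'S : η' ∉ S) (hne : η' ≠ η) :
    IsCutPoint M η := by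
  intro hpre
  have hclosed : IsClosed (S ∪ {η}) := by
    apply isClosed_of_closure_subset
    rw [closure_union, closure_singleton]
    exact Set.union_subset hcl Set.subset_union_right
  obtain ⟨w, hw1, hw2, hw3⟩ :=
    hpre S (S ∪ {η})ᶜ hSo hclosed.isOpen_compl
      (by
        intro w hw
        by_cases h : w ∈ S ∪ {η}
        · rcases h with h | h
          · exact Or.inl h
          · exact absurd h hw
        · exact Or.inr h)
      (by
        obtain ⟨s, hs⟩ := hSne
        have hsη : s ≠ η := fun h => hηS (h ▸ hs)
        exact ⟨s, by simpa using hsη, hs⟩)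
      (by
        refine ⟨η', by simpa using hne, ?_⟩
        intro h
        rcases h with h | h
        · exact hη'S h
        · exact hne h)
  exact hw3 (Or.inl hw2)

/-- If A, B are disjoint open sets with A ∪ B = {y,z}ᶜ then closure A ⊆ A ∪ {y,z}. -/
lemma aux_closure_in {A B : Set M} {y z : M} (hBo : IsOpen B)
    (hdisj : A ∩ B = ∅) (hun : A ∪ B = ({y, z} : Set M)ᶜ) :
    closure A ⊆ A ∪ ({y, z} : Set M) := by
  intro w hw
  by_cases hwB : w ∈ B
  · exfalso
    obtain ⟨t, htB, htA⟩ := mem_closure_iff.mp hw B hBo hwB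
    exact Set.eq_empty_iff_forall_notMem.mp hdisj t ⟨htA, htB⟩
  · by_cases hwyz : w ∈ ({y, z} : Set M)
    · exact Or.inr hwyz
    · have : w ∈ A ∪ B := by rw [hun]; exact hwyz
      rcases this with h | h
      · exact Or.inl h
      · exact absurd h hwB

/-- Key fact (separation form): each point of the removed pair is in the closure of each
side of any separation of the complement. -/
lemma aux_mem_closure_side {A B : Set M} {y z : M} (hAo : IsOpen A) (hBo : IsOpen B)
    (hdisj : A ∩ B = ∅) (hun : A ∪ B = ({y, z} : Set M)ᶜ) (hBne : B.Nonempty)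
    (hyz : y ≠ z) (hycut : ¬ IsCutPoint M y) (hzcut : ¬ IsCutPoint M z) :
    y ∈ closure B := by
  have hyB : y ∉ B := by
    intro h
    have : y ∈ A ∪ B := Or.inr h
    rw [hun] at this
    exact this (Set.mem_insert y {z})
  have hzB : z ∉ B := by
    intro h
    have : z ∈ A ∪ B := Or.inr h
    rw [hun] at this
    exact this (Set.mem_insert_iff.mpr (Or.inr rfl))
  have hclB : closure B ⊆ B ∪ ({y, z} : Set M) :=
    aux_closure_in hAo (by rw [Set.inter_comm]; exact hdisj) (by rw [Set.union_comm]; exact hun)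
  by_contra hy
  have hclB2 : closure B ⊆ B ∪ {z} := by
    intro w hw
    rcases hclB hw with h | h
    · exact Or.inl h
    · rcases h with h | h
      · exact absurd (h ▸ hw) hy
      · exact Or.inr h
  by_cases hz : z ∈ closure B
  · exact (hzcut (aux_cut hBo hBne hclB2 hzB hyB hyz)).elim
  · have hsub : closure B ⊆ B := by
      intro w hw
      rcases hclB2 hw with h | h
      · exact h
      · rcases h with h
        exact absurd (h ▸ hw) hz
    exact (aux_clopen_false hBo hsub hBne hyB).elim

/-- If both removed points σ,τ lie in the side A, then B ∪ {y,z} is preconnected. -/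
lemma aux_side_preconnected {A B : Set M} {y z : M} (hAo : IsOpen A) (hBo : IsOpen B)
    (hdisj : A ∩ B = ∅) (hun : A ∪ B = ({y, z} : Set M)ᶜ) (hBne : B.Nonempty)
    (hyz : y ≠ z) (hycut : ¬ IsCutPoint M y) (hzcut : ¬ IsCutPoint M z) :
    IsPreconnected (B ∪ ({y, z} : Set M)) := by
  have hyB : y ∈ closure B := aux_mem_closure_side hAo hBo hdisj hun hBne hyz hycut hzcut
  have hzB : z ∈ closure B := by
    apply aux_mem_closure_side hAo hBo hdisj ?_ hBne hyz.symm hzcut hycut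
    rw [Set.pair_comm z y]
    exact hun
  have hyBm : y ∉ B := by
    intro h
    have : y ∈ A ∪ B := Or.inr h
    rw [hun] at this
    exact this (Set.mem_insert y {z})
  have hzBm : z ∉ B := by
    intro h
    have : z ∈ A ∪ B := Or.inr h
    rw [hun] at this
    exact this (Set.mem_insert_iff.mpr (Or.inr rfl))
  have hclB : closure B ⊆ B ∪ ({y, z} : Set M) :=
    aux_closure_in hAo (by rw [Set.inter_comm]; exact hdisj) (by rw [Set.union_comm]; exact hun)
  have hXcl : IsClosed (B ∪ ({y, z} : Set M)) := by
    apply isClosed_of_closure_subset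
    rw [closure_union, (aux_pair_closed y z).closure_eq]
    exact Set.union_subset hclB Set.subset_union_right
  intro u v hu hv hcov hne1 hne2
  by_contra hemp'
  have hemp : ∀ w, w ∈ B ∪ ({y, z} : Set M) → w ∈ u → w ∈ v → False :=
    fun w h1 h2 h3 => hemp' ⟨w, h1, h2, h3⟩
  obtain ⟨x₁, hx₁X, hx₁u⟩ := hne1
  obtain ⟨x₂, hx₂X, hx₂v⟩ := hne2
  have hyX : y ∈ B ∪ ({y, z} : Set M) := Or.inr (Set.mem_insert y {z})
  have hzX : z ∈ B ∪ ({y, z} : Set M) := Or.inr (Set.mem_insert_iff.mpr (Or.inr rfl))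
  have hclX : ∀ {s : Set M} {w : M}, s ⊆ B → w ∈ closure s → w ∈ B ∪ ({y, z} : Set M) :=
    fun hs hw => hclB ((closure_mono hs) hw)
  rcases hcov hyX with hyu | hyv <;> rcases hcov hzX with hzu | hzv
  · -- y ∈ u, z ∈ u : the set B ∩ v is clopen, contradiction
    have hTcl : closure (B ∩ v) ⊆ B ∩ v := by
      intro w hw
      have hwX : w ∈ B ∪ ({y, z} : Set M) := hclX Set.inter_subset_left hw
      have hwu : w ∉ u := by
        intro hwu
        obtain ⟨t, htu, htB, htv⟩ := mem_closure_iff.mp hw u hu hwu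
        exact hemp t (Or.inl htB) htu htv
      have hwv : w ∈ v := (hcov hwX).resolve_left hwu
      have hwB : w ∈ B := by
        rcases hwX with h | h
        · exact h
        · rcases h with h | h
          · exact absurd (h ▸ hyu) hwu
          · exact absurd (h ▸ hzu) hwu
      exact ⟨hwB, hwv⟩
    have hTne : (B ∩ v).Nonempty := by
      refine ⟨x₂, ?_, hx₂v⟩
      rcases hx₂X with h | h
      · exact h
      · exfalso
        rcases h with rfl | rfl
        · exact hemp x₂ hyX hyu hx₂v
        · exact hemp x₂ hzX hzu hx₂v
    exact (aux_clopen_false (hBo.inter hv) hTcl hTne (fun h => hyBm h.1)).elim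
  · -- y ∈ u, z ∈ v : cut point at z via S = B ∩ v
    have hSne : (B ∩ v).Nonempty := by
      obtain ⟨t, htv, htB⟩ := mem_closure_iff.mp hzB v hv hzv
      exact ⟨t, htB, htv⟩
    have hclS : closure (B ∩ v) ⊆ (B ∩ v) ∪ {z} := by
      intro w hw
      have hwX : w ∈ B ∪ ({y, z} : Set M) := hclX Set.inter_subset_left hw
      have hwu : w ∉ u := by
        intro hwu
        obtain ⟨t, htu, htB, htv⟩ := mem_closure_iff.mp hw u hu hwu
        exact hemp t (Or.inl htB) htu htv
      have hwv : w ∈ v := (hcov hwX).resolve_left hwu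
      rcases hwX with h | h
      · exact Or.inl ⟨h, hwv⟩
      · rcases h with h | h
        · exact absurd (h ▸ hyu) hwu
        · exact Or.inr h
    exact (hzcut (aux_cut (hBo.inter hv) hSne hclS (fun h => hzBm h.1)
      (fun h => hyBm h.1) hyz)).elim
  · -- y ∈ v, z ∈ u : cut point at z via S = B ∩ u
    have hSne : (B ∩ u).Nonempty := by
      obtain ⟨t, htu, htB⟩ := mem_closure_iff.mp hzB u hu hzu
      exact ⟨t, htB, htu⟩
    have hclS : closure (B ∩ u) ⊆ (B ∩ u) ∪ {z} := by
      intro w hw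
      have hwX : w ∈ B ∪ ({y, z} : Set M) := hclX Set.inter_subset_left hw
      have hwv : w ∉ v := by
        intro hwv
        obtain ⟨t, htv, htB, htu⟩ := mem_closure_iff.mp hw v hv hwv
        exact hemp t (Or.inl htB) htu htv
      have hwu : w ∈ u := (hcov hwX).resolve_right hwv
      rcases hwX with h | h
      · exact Or.inl ⟨h, hwu⟩
      · rcases h with h | h
        · exact absurd (h ▸ hyv) hwv
        · exact Or.inr h
    exact (hzcut (aux_cut (hBo.inter hu) hSne hclS (fun h => hzBm h.1)
      (fun h => hyBm h.1) hyz)).elim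
  · -- y ∈ v, z ∈ v : the set B ∩ u is clopen, contradiction
    have hTcl : closure (B ∩ u) ⊆ B ∩ u := by
      intro w hw
      have hwX : w ∈ B ∪ ({y, z} : Set M) := hclX Set.inter_subset_left hw
      have hwv : w ∉ v := by
        intro hwv
        obtain ⟨t, htv, htB, htu⟩ := mem_closure_iff.mp hw v hv hwv
        exact hemp t (Or.inl htB) htu htv
      have hwu : w ∈ u := (hcov hwX).resolve_right hwv
      have hwB : w ∈ B := by
        rcases hwX with h | h
        · exact h
        · rcases h with h | h
          · exact absurd (h ▸ hyv) hwv
          · exact absurd (h ▸ hzv) hwv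
      exact ⟨hwB, hwu⟩
    have hTne : (B ∩ u).Nonempty := by
      refine ⟨x₁, ?_, hx₁u⟩
      rcases hx₁X with h | h
      · exact h
      · exfalso
        rcases h with rfl | rfl
        · exact hemp x₁ hyX hx₁u hyv
        · exact hemp x₁ hzX hx₁u hzv
    exact (aux_clopen_false (hBo.inter hu) hTcl hTne (fun h => hyBm h.1)).elim

/-- Branch lemma: if a nonempty clopen piece P of {a,b}ᶜ meets the side A (which contains at
most one of a,b), then P contains y or z. -/
lemma aux_branch {A P : Set M} {y z a b : M}
    (hAo : IsOpen A) (hPo : IsOpen P)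
    (hclA : closure A ⊆ A ∪ ({y, z} : Set M)) (hclP : closure P ⊆ P ∪ ({a, b} : Set M))
    (hyA : y ∉ A) (hzA : z ∉ A) (haP : a ∉ P) (hbP : b ∉ P)
    (hyab : y ∉ ({a, b} : Set M)) (hzab : z ∉ ({a, b} : Set M))
    (hab : a ≠ b) (hone : ¬(a ∈ A ∧ b ∈ A))
    (hacut : ¬ IsCutPoint M a) (hbcut : ¬ IsCutPoint M b)
    (hPA : (P ∩ A).Nonempty) : y ∈ P ∨ z ∈ P := by
  have hSo : IsOpen (P ∩ A) := hPo.inter hAo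
  have hclS : closure (P ∩ A) ⊆ (P ∪ ({a, b} : Set M)) ∩ (A ∪ ({y, z} : Set M)) :=
    Set.subset_inter ((closure_mono Set.inter_subset_left).trans hclP)
      ((closure_mono Set.inter_subset_right).trans hclA)
  by_cases hyS : y ∈ closure (P ∩ A)
  · rcases (hclS hyS).1 with h | h
    · exact Or.inl h
    · exact absurd h hyab
  by_cases hzS : z ∈ closure (P ∩ A)
  · rcases (hclS hzS).1 with h | h
    · exact Or.inr h
    · exact absurd h hzab
  have hclS2 : closure (P ∩ A) ⊆ (P ∩ A) ∪ (({a, b} : Set M) ∩ A) := by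
    intro w hw
    obtain ⟨h1, h2⟩ := hclS hw
    rcases h1 with hP' | hab'
    · rcases h2 with hA' | hyz'
      · exact Or.inl ⟨hP', hA'⟩
      · exfalso
        rcases hyz' with rfl | rfl
        · exact hyS hw
        · exact hzS hw
    · rcases h2 with hA' | hyz'
      · exact Or.inr ⟨hab', hA'⟩
      · exfalso
        rcases hyz' with rfl | rfl
        · exact hyab hab'
        · exact hzab hab'
  have haS' : a ∉ P ∩ A := fun h => haP h.1
  have hbS' : b ∉ P ∩ A := fun h => hbP h.1
  by_cases haS : a ∈ closure (P ∩ A)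
  · have haA : a ∈ A := by
      rcases hclS2 haS with h | h
      · exact absurd h haS'
      · exact h.2
    by_cases hbS : b ∈ closure (P ∩ A)
    · have hbA : b ∈ A := by
        rcases hclS2 hbS with h | h
        · exact absurd h hbS'
        · exact h.2
      exact absurd ⟨haA, hbA⟩ hone
    · have hclS3 : closure (P ∩ A) ⊆ (P ∩ A) ∪ {a} := by
        intro w hw
        rcases hclS2 hw with h | h
        · exact Or.inl h
        · rcases h.1 with rfl | rfl
          · exact Or.inr rfl
          · exact absurd hw hbS
      exact absurd (aux_cut hSo hPA hclS3 haS' hbS' (Ne.symm hab)) hacut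
  · by_cases hbS : b ∈ closure (P ∩ A)
    · have hclS3 : closure (P ∩ A) ⊆ (P ∩ A) ∪ {b} := by
        intro w hw
        rcases hclS2 hw with h | h
        · exact Or.inl h
        · rcases h.1 with rfl | rfl
          · exact absurd hw haS
          · exact Or.inr rfl
      exact absurd (aux_cut hSo hPA hclS3 hbS' haS' hab) hbcut
    · have hclS4 : closure (P ∩ A) ⊆ P ∩ A := by
        intro w hw
        rcases hclS2 hw with h | h
        · exact h
        · rcases h.1 with rfl | rfl
          · exact absurd hw haS
          · exact absurd hw hbS
      exact ((aux_clopen_false hSo hclS4 hPA (fun h => hyA h.2))).elim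

/-- Every nonempty clopen piece of {a,b}ᶜ contains y or z (core case). -/
lemma aux_clopen_piece {A B P Q : Set M} {y z a b : M}
    (hAo : IsOpen A) (hBo : IsOpen B) (hPo : IsOpen P) (hQo : IsOpen Q)
    (hABdisj : A ∩ B = ∅) (hABun : A ∪ B = ({y, z} : Set M)ᶜ)
    (hPQun : P ∪ Q = ({a, b} : Set M)ᶜ) (hPQdisj : P ∩ Q = ∅) (hPne : P.Nonempty)
    (hayz : a ∉ ({y, z} : Set M)) (hbyz : b ∉ ({y, z} : Set M)) (hab : a ≠ b)
    (honeA : ¬(a ∈ A ∧ b ∈ A)) (honeB : ¬(a ∈ B ∧ b ∈ B))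
    (hacut : ¬ IsCutPoint M a) (hbcut : ¬ IsCutPoint M b) :
    y ∈ P ∨ z ∈ P := by
  have hyab : y ∉ ({a, b} : Set M) := by
    intro h
    rcases h with rfl | rfl
    · exact hayz (Set.mem_insert y {z})
    · exact hbyz (Set.mem_insert y {z})
  have hzab : z ∉ ({a, b} : Set M) := by
    intro h
    rcases h with rfl | rfl
    · exact hayz (Set.mem_insert_iff.mpr (Or.inr rfl))
    · exact hbyz (Set.mem_insert_iff.mpr (Or.inr rfl))
  have hPsub : P ⊆ ({a, b} : Set M)ᶜ := by
    intro w hw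
    have : w ∈ P ∪ Q := Or.inl hw
    rwa [hPQun] at this
  have haP : a ∉ P := fun h => hPsub h (Set.mem_insert a {b})
  have hbP : b ∉ P := fun h => hPsub h (Set.mem_insert_iff.mpr (Or.inr rfl))
  have hclP : closure P ⊆ P ∪ ({a, b} : Set M) := aux_closure_in hQo hPQdisj hPQun
  have hclA : closure A ⊆ A ∪ ({y, z} : Set M) := aux_closure_in hBo hABdisj hABun
  have hclB : closure B ⊆ B ∪ ({y, z} : Set M) :=
    aux_closure_in hAo (by rw [Set.inter_comm]; exact hABdisj)
      (by rw [Set.union_comm]; exact hABun)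
  have hyA : y ∉ A := by
    intro h
    have : y ∈ A ∪ B := Or.inl h
    rw [hABun] at this
    exact this (Set.mem_insert y {z})
  have hzA : z ∉ A := by
    intro h
    have : z ∈ A ∪ B := Or.inl h
    rw [hABun] at this
    exact this (Set.mem_insert_iff.mpr (Or.inr rfl))
  have hyB : y ∉ B := by
    intro h
    have : y ∈ A ∪ B := Or.inr h
    rw [hABun] at this
    exact this (Set.mem_insert y {z})
  have hzB : z ∉ B := by
    intro h
    have : z ∈ A ∪ B := Or.inr h
    rw [hABun] at this
    exact this (Set.mem_insert_iff.mpr (Or.inr rfl))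
  by_cases hPA : (P ∩ A).Nonempty
  · exact aux_branch hAo hPo hclA hclP hyA hzA haP hbP hyab hzab hab honeA hacut hbcut hPA
  by_cases hPB : (P ∩ B).Nonempty
  · exact aux_branch hBo hPo hclB hclP hyB hzB haP hbP hyab hzab hab honeB hacut hbcut hPB
  · obtain ⟨p, hp⟩ := hPne
    have hpA : p ∉ A := fun h => hPA ⟨p, hp, h⟩
    have hpB : p ∉ B := fun h => hPB ⟨p, hp, h⟩
    have hpyz : p ∈ ({y, z} : Set M) := by
      by_contra h
      have : p ∈ A ∪ B := by rw [hABun]; exact h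
      rcases this with h' | h'
      · exact hpA h'
      · exact hpB h'
    rcases hpyz with rfl | rfl
    · exact Or.inl hp
    · exact Or.inr hp

/-- If every nonempty clopen piece of T contains p or q, with p ∈ P and q ∈ Q for a
separation P, Q of T, then P is preconnected. -/
lemma aux_piece_preconnected {P Q T : Set M} {p q : M}
    (hPo : IsOpen P) (hQo : IsOpen Q) (hPQun : P ∪ Q = T) (hPQdisj : P ∩ Q = ∅)
    (hcl : ∀ P' Q' : Set M, IsOpen P' → IsOpen Q' → P' ∪ Q' = T → P' ∩ Q' = ∅ →
      P'.Nonempty → p ∈ P' ∨ q ∈ P')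
    (hpP : p ∈ P) (hqQ : q ∈ Q) : IsPreconnected P := by
  intro u v hu hv hcov hne1 hne2
  by_contra hemp'
  have hemp : ∀ w, w ∈ P → w ∈ u → w ∈ v → False := fun w h1 h2 h3 => hemp' ⟨w, h1, h2, h3⟩
  obtain ⟨x₁, hx₁P, hx₁u⟩ := hne1
  obtain ⟨x₂, hx₂P, hx₂v⟩ := hne2
  have hqP : q ∉ P := fun h => Set.eq_empty_iff_forall_notMem.mp hPQdisj q ⟨h, hqQ⟩
  have hU : ∀ s t : Set M, (∀ w, w ∈ P → w ∈ s ∨ w ∈ t) → (P ∩ s) ∪ (Q ∪ (P ∩ t)) = T := by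
    intro s t hst
    rw [← hPQun]
    ext w
    constructor
    · rintro (⟨h, _⟩ | h | ⟨h, _⟩)
      · exact Or.inl h
      · exact Or.inr h
      · exact Or.inl h
    · rintro (h | h)
      · rcases hst w h with h' | h'
        · exact Or.inl ⟨h, h'⟩
        · exact Or.inr (Or.inr ⟨h, h'⟩)
      · exact Or.inr (Or.inl h)
  have hD : ∀ s t : Set M, (∀ w, w ∈ P → w ∈ s → w ∈ t → False) →
      (P ∩ s) ∩ (Q ∪ (P ∩ t)) = ∅ := by
    intro s t hst
    apply Set.eq_empty_iff_forall_notMem.mpr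
    rintro w ⟨⟨hwP, hws⟩, hwQ | ⟨_, hwt⟩⟩
    · exact Set.eq_empty_iff_forall_notMem.mp hPQdisj w ⟨hwP, hwQ⟩
    · exact hst w hwP hws hwt
  have hu' : p ∈ P ∩ u ∨ q ∈ P ∩ u :=
    hcl (P ∩ u) (Q ∪ (P ∩ v)) (hPo.inter hu) (hQo.union (hPo.inter hv))
      (hU u v fun w h => hcov h) (hD u v hemp) ⟨x₁, hx₁P, hx₁u⟩
  have hv' : p ∈ P ∩ v ∨ q ∈ P ∩ v :=
    hcl (P ∩ v) (Q ∪ (P ∩ u)) (hPo.inter hv) (hQo.union (hPo.inter hu))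
      (hU v u fun w h => (hcov h).symm) (hD v u fun w h1 h2 h3 => hemp w h1 h3 h2)
      ⟨x₂, hx₂P, hx₂v⟩
  have hpu : p ∈ u := by
    rcases hu' with h | h
    · exact h.2
    · exact absurd h.1 hqP
  have hpv : p ∈ v := by
    rcases hv' with h | h
    · exact h.2
    · exact absurd h.1 hqP
  exact hemp p hpP hpu hpv

end Aux

theorem stmt1 {M : Type*} [TopologicalSpace M] [CompactSpace M] [ConnectedSpace M]
    [TopologicalSpace.MetrizableSpace M]
    (hnocut : ∀ η : M, ¬ IsCutPoint M η)
    (σ τ ζ ξ : M)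
    (hστ : IsCutPair M σ τ)
    (hthree : ∃ a b c : M, a ∈ (({σ, τ} : Set M)ᶜ) ∧ b ∈ (({σ, τ} : Set M)ᶜ) ∧
      c ∈ (({σ, τ} : Set M)ᶜ) ∧
      connectedComponentIn (({σ, τ} : Set M)ᶜ) a ≠ connectedComponentIn (({σ, τ} : Set M)ᶜ) b ∧
      connectedComponentIn (({σ, τ} : Set M)ᶜ) a ≠ connectedComponentIn (({σ, τ} : Set M)ᶜ) c ∧
      connectedComponentIn (({σ, τ} : Set M)ᶜ) b ≠ connectedComponentIn (({σ, τ} : Set M)ᶜ) c)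
    (hζξ : IsCutPair M ζ ξ)
    (hdisj : ({ζ, ξ} : Set M) ∩ ({σ, τ} : Set M) = ∅) :
    connectedComponentIn (({σ, τ} : Set M)ᶜ) ζ = connectedComponentIn (({σ, τ} : Set M)ᶜ) ξ := by
  classical
  haveI : T1Space M := inferInstance
  obtain ⟨hζξne, hζξdisc, _, _⟩ := hζξ
  obtain ⟨hστne, hστdisc, _, _⟩ := hστ
  have hdisj' : ∀ w, w ∈ ({ζ, ξ} : Set M) → w ∈ ({σ, τ} : Set M) → False :=
    fun w h1 h2 => Set.eq_empty_iff_forall_notMem.mp hdisj w ⟨h1, h2⟩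
  have hζστ : ζ ∉ ({σ, τ} : Set M) := fun h => hdisj' ζ (Set.mem_insert ζ {ξ}) h
  have hξστ : ξ ∉ ({σ, τ} : Set M) := fun h => hdisj' ξ (Set.mem_insert_iff.mpr (Or.inr rfl)) h
  have hσζξ : σ ∉ ({ζ, ξ} : Set M) := fun h => hdisj' σ h (Set.mem_insert σ {τ})
  have hτζξ : τ ∉ ({ζ, ξ} : Set M) := fun h => hdisj' τ h (Set.mem_insert_iff.mpr (Or.inr rfl))
  -- a separation of {ζ,ξ}ᶜ
  unfold IsPreconnected at hζξdisc
  push_neg at hζξdisc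
  obtain ⟨u, v, hu, hv, hcov, hne1, hne2, hemp⟩ := hζξdisc
  set A : Set M := ({ζ, ξ} : Set M)ᶜ ∩ u with hAdef
  set B : Set M := ({ζ, ξ} : Set M)ᶜ ∩ v with hBdef
  have hζξopen : IsOpen (({ζ, ξ} : Set M)ᶜ) := (aux_pair_closed ζ ξ).isOpen_compl
  have hAo : IsOpen A := hζξopen.inter hu
  have hBo : IsOpen B := hζξopen.inter hv
  have hABdisj : A ∩ B = ∅ := by
    apply Set.eq_empty_iff_forall_notMem.mpr
    rintro w ⟨⟨hw1, hw2⟩, hw3, hw4⟩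
    exact Set.eq_empty_iff_forall_notMem.mp hemp w ⟨hw1, hw2, hw4⟩
  have hABun : A ∪ B = ({ζ, ξ} : Set M)ᶜ := by
    rw [hAdef, hBdef, ← Set.inter_union_distrib_left]
    exact Set.inter_eq_left.mpr hcov
  have hAne : A.Nonempty := hne1
  have hBne : B.Nonempty := hne2
  have hζU : ζ ∈ (({σ, τ} : Set M)ᶜ) := hζστ
  have hξU : ξ ∈ (({σ, τ} : Set M)ᶜ) := hξστ
  by_cases hcase1 : σ ∈ A ∧ τ ∈ A
  · -- both in A : connect ζ, ξ through B ∪ {ζ, ξ}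
    have hpre : IsPreconnected (B ∪ ({ζ, ξ} : Set M)) :=
      aux_side_preconnected hAo hBo hABdisj hABun hBne hζξne (hnocut ζ) (hnocut ξ)
    have hXU : B ∪ ({ζ, ξ} : Set M) ⊆ (({σ, τ} : Set M)ᶜ) := by
      rintro w (hw | hw)
      · intro h
        rcases h with rfl | rfl
        · exact Set.eq_empty_iff_forall_notMem.mp hABdisj w ⟨hcase1.1, hw⟩
        · exact Set.eq_empty_iff_forall_notMem.mp hABdisj w ⟨hcase1.2, hw⟩
      · rcases hw with rfl | rfl
        · exact hζστ
        · exact hξστ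
    have hsub := hpre.subset_connectedComponentIn
      (Or.inr (Set.mem_insert ζ {ξ}) : ζ ∈ B ∪ ({ζ, ξ} : Set M)) hXU
    exact connectedComponentIn_eq (hsub (Or.inr (Set.mem_insert_iff.mpr (Or.inr rfl))))
  by_cases hcase2 : σ ∈ B ∧ τ ∈ B
  · -- both in B : connect ζ, ξ through A ∪ {ζ, ξ}
    have hpre : IsPreconnected (A ∪ ({ζ, ξ} : Set M)) :=
      aux_side_preconnected hBo hAo (by rw [Set.inter_comm]; exact hABdisj)
        (by rw [Set.union_comm]; exact hABun) hAne hζξne (hnocut ζ) (hnocut ξ)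
    have hXU : A ∪ ({ζ, ξ} : Set M) ⊆ (({σ, τ} : Set M)ᶜ) := by
      rintro w (hw | hw)
      · intro h
        rcases h with rfl | rfl
        · exact Set.eq_empty_iff_forall_notMem.mp hABdisj w ⟨hw, hcase2.1⟩
        · exact Set.eq_empty_iff_forall_notMem.mp hABdisj w ⟨hw, hcase2.2⟩
      · rcases hw with rfl | rfl
        · exact hζστ
        · exact hξστ
    have hsub := hpre.subset_connectedComponentIn
      (Or.inr (Set.mem_insert ζ {ξ}) : ζ ∈ A ∪ ({ζ, ξ} : Set M)) hXU
    exact connectedComponentIn_eq (hsub (Or.inr (Set.mem_insert_iff.mpr (Or.inr rfl))))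
  · -- core case: each side contains at most one of σ, τ
    unfold IsPreconnected at hστdisc
    push_neg at hστdisc
    obtain ⟨u₀, v₀, hu₀, hv₀, hcov₀, hne₀1, hne₀2, hemp₀⟩ := hστdisc
    have hστopen : IsOpen (({σ, τ} : Set M)ᶜ) := (aux_pair_closed σ τ).isOpen_compl
    set P : Set M := ({σ, τ} : Set M)ᶜ ∩ u₀ with hPdef
    set Q : Set M := ({σ, τ} : Set M)ᶜ ∩ v₀ with hQdef
    have hPo : IsOpen P := hστopen.inter hu₀
    have hQo : IsOpen Q := hστopen.inter hv₀
    have hPQun : P ∪ Q = ({σ, τ} : Set M)ᶜ := by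
      rw [hPdef, hQdef, ← Set.inter_union_distrib_left]
      exact Set.inter_eq_left.mpr hcov₀
    have hPQdisj : P ∩ Q = ∅ := by
      apply Set.eq_empty_iff_forall_notMem.mpr
      rintro w ⟨⟨hw1, hw2⟩, hw3, hw4⟩
      exact Set.eq_empty_iff_forall_notMem.mp hemp₀ w ⟨hw1, hw2, hw4⟩
    have hPne : P.Nonempty := hne₀1
    have hQne : Q.Nonempty := hne₀2
    have hclopen : ∀ P' Q' : Set M, IsOpen P' → IsOpen Q' → P' ∪ Q' = ({σ, τ} : Set M)ᶜ →
        P' ∩ Q' = ∅ → P'.Nonempty → ζ ∈ P' ∨ ξ ∈ P' := by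
      intro P' Q' hP'o hQ'o hun' hdisj' hne'
      exact aux_clopen_piece hAo hBo hP'o hQ'o hABdisj hABun hun' hdisj' hne'
        hσζξ hτζξ hστne hcase1 hcase2 (hnocut σ) (hnocut τ)
    have main : ∀ p q : M, p ∈ P → q ∈ Q →
        (∀ P' Q' : Set M, IsOpen P' → IsOpen Q' → P' ∪ Q' = ({σ, τ} : Set M)ᶜ →
          P' ∩ Q' = ∅ → P'.Nonempty → p ∈ P' ∨ q ∈ P') → False := by
      intro p q hpP hqQ hcl
      have hPpre : IsPreconnected P :=
        aux_piece_preconnected hPo hQo hPQun hPQdisj hcl hpP hqQ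
      have hQpre : IsPreconnected Q :=
        aux_piece_preconnected hQo hPo (by rw [Set.union_comm]; exact hPQun)
          (by rw [Set.inter_comm]; exact hPQdisj)
          (fun P' Q' h1 h2 h3 h4 h5 => (hcl P' Q' h1 h2 h3 h4 h5).symm) hqQ hpP
      have hccP : ∀ x, x ∈ P → connectedComponentIn (({σ, τ} : Set M)ᶜ) x = P := by
        intro x hx
        have hxU : x ∈ (({σ, τ} : Set M)ᶜ) := by
          have : x ∈ P ∪ Q := Or.inl hx
          rwa [hPQun] at this
        apply Set.Subset.antisymm
        · have hsub : connectedComponentIn (({σ, τ} : Set M)ᶜ) x ⊆ (({σ, τ} : Set M)ᶜ) :=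
            connectedComponentIn_subset _ _
          have hpre := isPreconnected_connectedComponentIn
            (F := (({σ, τ} : Set M)ᶜ)) (x := x)
          have hxcc : x ∈ connectedComponentIn (({σ, τ} : Set M)ᶜ) x :=
            mem_connectedComponentIn hxU
          by_cases hvne : (connectedComponentIn (({σ, τ} : Set M)ᶜ) x ∩ v₀).Nonempty
          · obtain ⟨t, htcc, htu, htv⟩ := hpre u₀ v₀ hu₀ hv₀
              (fun w hw => hcov₀ (hsub hw)) ⟨x, hxcc, hx.2⟩ hvne
            exact (Set.eq_empty_iff_forall_notMem.mp hemp₀ t ⟨hsub htcc, htu, htv⟩).elim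
          · intro w hw
            have hwU := hsub hw
            rcases hcov₀ hwU with h | h
            · exact ⟨hwU, h⟩
            · exact absurd ⟨w, hw, h⟩ hvne
        · exact hPpre.subset_connectedComponentIn hx
            (by intro w hw; have : w ∈ P ∪ Q := Or.inl hw; rwa [hPQun] at this)
      have hccQ : ∀ x, x ∈ Q → connectedComponentIn (({σ, τ} : Set M)ᶜ) x = Q := by
        intro x hx
        have hxU : x ∈ (({σ, τ} : Set M)ᶜ) := by
          have : x ∈ P ∪ Q := Or.inr hx
          rwa [hPQun] at this
        apply Set.Subset.antisymm
        · have hsub : connectedComponentIn (({σ, τ} : Set M)ᶜ) x ⊆ (({σ, τ} : Set M)ᶜ) :=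
            connectedComponentIn_subset _ _
          have hpre := isPreconnected_connectedComponentIn
            (F := (({σ, τ} : Set M)ᶜ)) (x := x)
          have hxcc : x ∈ connectedComponentIn (({σ, τ} : Set M)ᶜ) x :=
            mem_connectedComponentIn hxU
          by_cases hvne : (connectedComponentIn (({σ, τ} : Set M)ᶜ) x ∩ u₀).Nonempty
          · obtain ⟨t, htcc, htu, htv⟩ := hpre v₀ u₀ hv₀ hu₀
              (fun w hw => (hcov₀ (hsub hw)).symm) ⟨x, hxcc, hx.2⟩ hvne
            exact (Set.eq_empty_iff_forall_notMem.mp hemp₀ t ⟨hsub htcc, htv, htu⟩).elim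
          · intro w hw
            have hwU := hsub hw
            rcases hcov₀ hwU with h | h
            · exact absurd ⟨w, hw, h⟩ hvne
            · exact ⟨hwU, h⟩
        · exact hQpre.subset_connectedComponentIn hx
            (by intro w hw; have : w ∈ P ∪ Q := Or.inr hw; rwa [hPQun] at this)
      obtain ⟨a, b, c, haU, hbU, hcU, h1, h2, h3⟩ := hthree
      have hval : ∀ x, x ∈ (({σ, τ} : Set M)ᶜ) →
          connectedComponentIn (({σ, τ} : Set M)ᶜ) x = P ∨
          connectedComponentIn (({σ, τ} : Set M)ᶜ) x = Q := by
        intro x hx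
        have : x ∈ P ∪ Q := by rw [hPQun]; exact hx
        rcases this with h | h
        · exact Or.inl (hccP x h)
        · exact Or.inr (hccQ x h)
      rcases hval a haU with ha | ha <;> rcases hval b hbU with hb | hb <;>
        rcases hval c hcU with hc | hc
      · exact h1 (ha.trans hb.symm)
      · exact h1 (ha.trans hb.symm)
      · exact h2 (ha.trans hc.symm)
      · exact h3 (hb.trans hc.symm)
      · exact h3 (hb.trans hc.symm)
      · exact h2 (ha.trans hc.symm)
      · exact h1 (ha.trans hb.symm)
      · exact h1 (ha.trans hb.symm)
    rcases hclopen P Q hPo hQo hPQun hPQdisj hPne with hζP | hξP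
    · have hξQ : ξ ∈ Q := by
        rcases hclopen Q P hQo hPo (by rw [Set.union_comm]; exact hPQun)
          (by rw [Set.inter_comm]; exact hPQdisj) hQne with hζQ | hξQ
        · exact (Set.eq_empty_iff_forall_notMem.mp hPQdisj ζ ⟨hζP, hζQ⟩).elim
        · exact hξQ
      exact (main ζ ξ hζP hξQ hclopen).elim
    · have hζQ : ζ ∈ Q := by
        rcases hclopen Q P hQo hPo (by rw [Set.union_comm]; exact hPQun)
          (by rw [Set.inter_comm]; exact hPQdisj) hQne with hζQ | hξQ
        · exact hζQ
        · exact (Set.eq_empty_iff_forall_notMem.mp hPQdisj ξ ⟨hξP, hξQ⟩).elim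
      exact (main ξ ζ hξP hζQ
        (fun P' Q' h1 h2 h3 h4 h5 => (hclopen P' Q' h1 h2 h3 h4 h5).symm)).elim
end

section
/- Let M be a compact connected metrizable space, {ζ,ξ} a cut pair of M, and η a cut point of M with η ∉ {ζ,ξ}. Then ζ and ξ lie in the same connected component of M \ {η}. Consequently no cut point of M separates the two points of a cut pair. -/
open Set

section helpers

variable {M : Type*} [TopologicalSpace M]

/-- Any subset of `K = V ∪ {ζ,ξ}` that is clopen in `K` and avoids both `ζ` and `ξ`
is empty, when `M` is preconnected and `U ⊔ V = M \ {ζ,ξ}`. -/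
lemma clopen_empty_aux [PreconnectedSpace M] {ζ ξ : M} {U V : Set M}
    (hU : IsOpen U) (hV : IsOpen V)
    (hdisj : U ∩ V = ∅) (hcover : U ∪ V = ({ζ, ξ} : Set M)ᶜ)
    {D : Set M} (hDsub : D ⊆ V ∪ {ζ, ξ}) (hD : IsClosed D)
    (hD2 : IsClosed ((V ∪ {ζ, ξ}) \ D)) (hζD : ζ ∉ D) (hξD : ξ ∉ D) : D = ∅ := by
  have hUsub : U ⊆ ({ζ, ξ} : Set M)ᶜ := hcover ▸ subset_union_left
  have hKcU : (V ∪ ({ζ, ξ} : Set M))ᶜ = U := by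
    ext x
    constructor
    · intro hx
      simp only [mem_compl_iff, mem_union, not_or] at hx
      have : x ∈ U ∪ V := by rw [hcover]; exact hx.2
      rcases this with h | h
      · exact h
      · exact absurd h hx.1
    · intro hx
      simp only [mem_compl_iff, mem_union, not_or]
      refine ⟨fun hxV => ?_, fun hxp => hUsub hx hxp⟩
      exact absurd (mem_inter hx hxV) (by rw [hdisj]; exact notMem_empty x)
  have hclU : closure U ⊆ U ∪ ({ζ, ξ} : Set M) := by
    have h1 : closure U ⊆ Vᶜ :=
      closure_minimal (fun x hx hxV =>
        absurd (mem_inter hx hxV) (by rw [hdisj]; exact notMem_empty x)) hV.isClosed_compl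
    intro x hx
    by_cases hxp : x ∈ ({ζ, ξ} : Set M)
    · exact Or.inr hxp
    · left
      have : x ∈ U ∪ V := by rw [hcover]; exact hxp
      rcases this with h | h
      · exact h
      · exact absurd h (h1 hx)
  have hDcompl : Dᶜ = ((V ∪ {ζ, ξ}) \ D) ∪ closure U := by
    ext x
    constructor
    · intro hx
      by_cases hxK : x ∈ V ∪ ({ζ, ξ} : Set M)
      · exact Or.inl ⟨hxK, hx⟩
      · exact Or.inr (subset_closure (hKcU ▸ hxK))
    · rintro (⟨_, hx⟩ | hx)
      · exact hx
      · intro hxD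
        rcases hclU hx with h | h
        · have : x ∈ V ∪ ({ζ, ξ} : Set M) := hDsub hxD
          rcases this with h' | h'
          · exact absurd (mem_inter h h') (by rw [hdisj]; exact notMem_empty x)
          · exact hUsub h h'
        · rcases h with h | h
          · exact hζD (h ▸ hxD)
          · simp only [mem_singleton_iff] at h
            exact hξD (h ▸ hxD)
  have hDopen : IsOpen D := by
    rw [← isClosed_compl_iff, hDcompl]
    exact hD2.union isClosed_closure
  rcases isClopen_iff.mp ⟨hD, hDopen⟩ with h | h
  · exact h
  · exact absurd (h ▸ (mem_univ ζ)) hζD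

/-- In a compact Hausdorff space in which every clopen set avoiding `a` and `b` is empty,
every point lies in the connected component of `a` or that of `b`. -/
lemma comp_two {X : Type*} [TopologicalSpace X] [T2Space X] [CompactSpace X] {a b : X}
    (h : ∀ Z : Set X, IsClopen Z → a ∉ Z → b ∉ Z → Z = ∅) (x : X) :
    x ∈ connectedComponent a ∨ x ∈ connectedComponent b := by
  by_contra hc
  push_neg at hc
  obtain ⟨h1, h2⟩ := hc
  have ha : a ∉ connectedComponent x := fun h' =>
    h1 ((connectedComponent_eq h') ▸ mem_connectedComponent)
  have hb : b ∉ connectedComponent x := fun h' =>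
    h2 ((connectedComponent_eq h') ▸ mem_connectedComponent)
  rw [connectedComponent_eq_iInter_isClopen, mem_iInter] at ha hb
  push_neg at ha hb
  obtain ⟨⟨Z1, hZ1, hxZ1⟩, haZ1⟩ := ha
  obtain ⟨⟨Z2, hZ2, hxZ2⟩, hbZ2⟩ := hb
  have := h (Z1 ∩ Z2) (hZ1.inter hZ2) (fun hmem => haZ1 hmem.1) (fun hmem => hbZ2 hmem.2)
  exact absurd (this ▸ mem_inter hxZ1 hxZ2) (notMem_empty x)

/-- Structure of a closed subset `K` of a compact Hausdorff space in which every
relatively clopen subset avoiding `a, b ∈ K` is empty: `K` is covered by the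
components (in `K`) of `a` and of `b`. -/
lemma comp_struct [CompactSpace M] [T2Space M] {K : Set M} (hK : IsClosed K)
    {a b : M} (ha : a ∈ K) (hb : b ∈ K)
    (h : ∀ D, D ⊆ K → IsClosed D → IsClosed (K \ D) → a ∉ D → b ∉ D → D = ∅) :
    ∃ Ca Cb : Set M, IsClosed Ca ∧ IsClosed Cb ∧ IsPreconnected Ca ∧ IsPreconnected Cb ∧
      a ∈ Ca ∧ b ∈ Cb ∧ Ca ⊆ K ∧ Cb ⊆ K ∧ K ⊆ Ca ∪ Cb ∧
      (b ∈ Ca → Ca = Cb) ∧ (b ∉ Ca → Ca ∩ Cb = ∅) := by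
  haveI : CompactSpace ↥K := isCompact_iff_compactSpace.mp hK.isCompact
  set a' : ↥K := ⟨a, ha⟩
  set b' : ↥K := ⟨b, hb⟩
  set Ca : Set M := (↑) '' connectedComponent a' with hCa
  set Cb : Set M := (↑) '' connectedComponent b' with hCb
  have hCaK : Ca ⊆ K := by rintro x ⟨y, _, rfl⟩; exact y.2
  have hCbK : Cb ⊆ K := by rintro x ⟨y, _, rfl⟩; exact y.2
  have hclosed : ∀ c' : ↥K, IsClosed ((↑) '' connectedComponent c' : Set M) := fun c' =>
    (isClosed_connectedComponent.isCompact.image continuous_subtype_val).isClosed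
  have hkey : ∀ Z : Set ↥K, IsClopen Z → a' ∉ Z → b' ∉ Z → Z = ∅ := by
    intro Z hZ haZ hbZ
    set D : Set M := (↑) '' Z with hD
    have hDK : D ⊆ K := by rintro x ⟨y, _, rfl⟩; exact y.2
    have hDclosed : IsClosed D := (hZ.isClosed.isCompact.image continuous_subtype_val).isClosed
    have hKD : K \ D = (↑) '' Zᶜ := by
      ext x
      constructor
      · rintro ⟨hxK, hxD⟩
        exact ⟨⟨x, hxK⟩, fun hmem => hxD ⟨⟨x, hxK⟩, hmem, rfl⟩, rfl⟩
      · rintro ⟨y, hy, rfl⟩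
        refine ⟨y.2, fun hmem => ?_⟩
        obtain ⟨z, hz, hzy⟩ := hmem
        exact hy ((Subtype.coe_injective hzy) ▸ hz)
    have hKDclosed : IsClosed (K \ D) := by
      rw [hKD]
      exact (hZ.compl.isClosed.isCompact.image continuous_subtype_val).isClosed
    have haD : a ∉ D := by
      rintro ⟨z, hz, hza⟩
      exact haZ ((Subtype.ext hza : z = a') ▸ hz)
    have hbD : b ∉ D := by
      rintro ⟨z, hz, hzb⟩
      exact hbZ ((Subtype.ext hzb : z = b') ▸ hz)
    have hempty := h D hDK hDclosed hKDclosed haD hbD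
    rw [eq_empty_iff_forall_notMem]
    intro z hz
    exact absurd (hempty ▸ ⟨z, hz, rfl⟩ : (z : M) ∈ (∅ : Set M)) (notMem_empty _)
  refine ⟨Ca, Cb, hclosed a', hclosed b',
    isPreconnected_connectedComponent.image _ continuous_subtype_val.continuousOn,
    isPreconnected_connectedComponent.image _ continuous_subtype_val.continuousOn,
    ⟨a', mem_connectedComponent, rfl⟩, ⟨b', mem_connectedComponent, rfl⟩,
    hCaK, hCbK, ?_, ?_, ?_⟩
  · intro x hx
    rcases comp_two hkey (⟨x, hx⟩ : ↥K) with h' | h'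
    · exact Or.inl ⟨⟨x, hx⟩, h', rfl⟩
    · exact Or.inr ⟨⟨x, hx⟩, h', rfl⟩
  · rintro ⟨y, hy, hyb⟩
    have : b' ∈ connectedComponent a' := (Subtype.ext hyb : y = b') ▸ hy
    rw [hCa, hCb, connectedComponent_eq this]
  · intro hbCa
    rw [eq_empty_iff_forall_notMem]
    rintro x ⟨⟨y, hy, rfl⟩, ⟨z, hz, hzy⟩⟩
    have hzy' : z = y := Subtype.coe_injective hzy
    have : connectedComponent a' = connectedComponent b' := by
      rw [connectedComponent_eq hy, ← connectedComponent_eq (hzy' ▸ hz)]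
    exact hbCa ⟨b', this ▸ mem_connectedComponent, rfl⟩

end helpers

/-- Key lemma: given a separation `U ⊔ V` of `M \ {ζ,ξ}` with `η ∈ U`, the points
`ζ` and `ξ` are joined by a connected set avoiding `η`. -/
lemma key {M : Type*} [TopologicalSpace M] [CompactSpace M] [PreconnectedSpace M] [T2Space M]
    (ζ ξ η : M) (hζξ : ζ ≠ ξ)
    (hζ : IsPreconnected ({ζ}ᶜ : Set M)) (hξ : IsPreconnected ({ξ}ᶜ : Set M))
    (U V : Set M) (hU : IsOpen U) (hV : IsOpen V)
    (hdisj : U ∩ V = ∅) (hcover : U ∪ V = ({ζ, ξ} : Set M)ᶜ)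
    (hVne : V.Nonempty) (hηU : η ∈ U) :
    ∃ C : Set M, IsPreconnected C ∧ C ⊆ ({η} : Set M)ᶜ ∧ ζ ∈ C ∧ ξ ∈ C := by
  have hUsub : U ⊆ ({ζ, ξ} : Set M)ᶜ := hcover ▸ subset_union_left
  have hVsub : V ⊆ ({ζ, ξ} : Set M)ᶜ := hcover ▸ subset_union_right
  have hζU : ζ ∉ U := fun h => hUsub h (Or.inl rfl)
  have hξU : ξ ∉ U := fun h => hUsub h (Or.inr rfl)
  have hζV : ζ ∉ V := fun h => hVsub h (Or.inl rfl)
  have hξV : ξ ∉ V := fun h => hVsub h (Or.inr rfl)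
  have hηζ : η ≠ ζ := fun h => hζU (h ▸ hηU)
  have hηξ : η ≠ ξ := fun h => hξU (h ▸ hηU)
  have hmemUV : ∀ x : M, x ≠ ζ → x ≠ ξ → x ∈ U ∪ V := by
    intro x h1 h2
    rw [hcover]
    simp [h1, h2]
  -- K = V ∪ {ζ, ξ} and L = U ∪ {ζ, ξ} are closed
  have hKcU : (V ∪ ({ζ, ξ} : Set M))ᶜ = U := by
    ext x
    constructor
    · intro hx
      simp only [mem_compl_iff, mem_union, not_or] at hx
      rcases hmemUV x (fun h => hx.2 (Or.inl h)) (fun h => hx.2 (Or.inr h)) with h | h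
      · exact h
      · exact absurd h hx.1
    · intro hx
      simp only [mem_compl_iff, mem_union, not_or]
      exact ⟨fun hxV => absurd (mem_inter hx hxV) (by rw [hdisj]; exact notMem_empty x),
        fun hxp => hUsub hx hxp⟩
  have hLcV : (U ∪ ({ζ, ξ} : Set M))ᶜ = V := by
    ext x
    constructor
    · intro hx
      simp only [mem_compl_iff, mem_union, not_or] at hx
      rcases hmemUV x (fun h => hx.2 (Or.inl h)) (fun h => hx.2 (Or.inr h)) with h | h
      · exact absurd h hx.1
      · exact h
    · intro hx
      simp only [mem_compl_iff, mem_union, not_or]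
      exact ⟨fun hxU => absurd (mem_inter hxU hx) (by rw [hdisj]; exact notMem_empty x),
        fun hxp => hVsub hx hxp⟩
  have hKclosed : IsClosed (V ∪ ({ζ, ξ} : Set M)) := by
    rw [← isOpen_compl_iff, hKcU]; exact hU
  have hLclosed : IsClosed (U ∪ ({ζ, ξ} : Set M)) := by
    rw [← isOpen_compl_iff, hLcV]; exact hV
  have hLK : (U ∪ ({ζ, ξ} : Set M)) ∩ (V ∪ ({ζ, ξ} : Set M)) ⊆ ({ζ, ξ} : Set M) := by
    rintro x ⟨h1 | h1, h2 | h2⟩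
    · exact absurd (mem_inter h1 h2) (by rw [hdisj]; exact notMem_empty x)
    · exact h2
    · exact h1
    · exact h1
  have hηK : η ∉ V ∪ ({ζ, ξ} : Set M) := by rw [← hKcU] at hηU; exact hηU
  -- ξ lies in the closure of V
  have hξclV : ξ ∈ closure V := by
    by_contra hcl
    obtain ⟨p0, hp0⟩ := hVne
    have hcov : ({ζ}ᶜ : Set M) ⊆ (closure V)ᶜ ∪ V := by
      intro x hx
      by_cases hxc : x ∈ closure V
      · have hxK : x ∈ V ∪ ({ζ, ξ} : Set M) :=
          closure_minimal subset_union_left hKclosed hxc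
        rcases hxK with h | h
        · exact Or.inr h
        · rcases h with h | h
          · exact absurd h hx
          · simp only [mem_singleton_iff] at h
            exact absurd (h ▸ hxc) hcl
      · exact Or.inl hxc
    obtain ⟨x, _, hx2, hx3⟩ := hζ (closure V)ᶜ V isClosed_closure.isOpen_compl hV hcov
      ⟨ξ, fun h => hζξ (mem_singleton_iff.mp h).symm, hcl⟩
      ⟨p0, fun h => hζV ((mem_singleton_iff.mp h) ▸ hp0), hp0⟩
    exact hx2 (subset_closure hx3)
  -- decompose K into the components of ζ and ξ
  obtain ⟨Cζ, Cξ, hCζc, hCξc, hCζp, hCξp, hζCζ, hξCξ, hCζK, hCξK, hKcov, hCeq, hCdisj⟩ :=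
    comp_struct hKclosed (Or.inr (Or.inl rfl) : ζ ∈ V ∪ ({ζ, ξ} : Set M))
      (Or.inr (Or.inr rfl) : ξ ∈ V ∪ ({ζ, ξ} : Set M))
      (fun D hDsub hD hD2 hζD hξD => clopen_empty_aux hU hV hdisj hcover hDsub hD hD2 hζD hξD)
  by_cases hcase : ξ ∈ Cζ
  · exact ⟨Cζ, hCζp, fun x hx hxη => hηK ((mem_singleton_iff.mp hxη) ▸ hCζK hx),
      hζCζ, hcase⟩
  -- otherwise Cζ and Cξ are disjoint; derive a contradiction
  exfalso
  have hCC : Cζ ∩ Cξ = ∅ := hCdisj hcase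
  have hξCζ : ξ ∉ Cζ := hcase
  have hζCξ : ζ ∉ Cξ := fun h =>
    absurd (mem_inter hζCζ h) (by rw [hCC]; exact notMem_empty ζ)
  -- Cξ contains a point other than ξ
  have hp : ∃ p ∈ Cξ, p ≠ ξ := by
    by_contra hcon
    push_neg at hcon
    have hVCζ : V ⊆ Cζ := by
      intro x hxV
      rcases hKcov (Or.inl hxV) with h | h
      · exact h
      · exact absurd ((hcon x h) ▸ hxV) hξV
    exact hξCζ (closure_minimal hVCζ hCζc hξclV)
  obtain ⟨p, hpCξ, hpξ⟩ := hp
  -- decompose L into the components of ζ and ξ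
  obtain ⟨Dζ, Dξ, hDζc, hDξc, _, _, hζDζ, hξDξ, hDζL, hDξL, hLcov, hDeq, hDdisj⟩ :=
    comp_struct hLclosed (Or.inr (Or.inl rfl) : ζ ∈ U ∪ ({ζ, ξ} : Set M))
      (Or.inr (Or.inr rfl) : ξ ∈ U ∪ ({ζ, ξ} : Set M))
      (fun D hDsub hD hD2 hζD hξD => clopen_empty_aux hV hU (by rw [inter_comm]; exact hdisj)
        (by rw [union_comm]; exact hcover) hDsub hD hD2 hζD hξD)
  have hMcov : ∀ x : M, x ∈ (U ∪ ({ζ, ξ} : Set M)) ∪ (V ∪ ({ζ, ξ} : Set M)) := by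
    intro x
    by_cases h1 : x = ζ
    · exact Or.inl (Or.inr (Or.inl h1))
    by_cases h2 : x = ξ
    · exact Or.inl (Or.inr (Or.inr h2))
    rcases hmemUV x h1 h2 with h | h
    · exact Or.inl (Or.inl h)
    · exact Or.inr (Or.inl h)
  by_cases hcase2 : ξ ∈ Dζ
  · -- L is a single component Dζ = Dξ; contradict ξ being a non-cut point
    have hDeq' := hDeq hcase2
    have hLsub : U ∪ ({ζ, ξ} : Set M) ⊆ Dζ := by
      intro x hx
      rcases hLcov hx with h | h
      · exact h
      · rw [hDeq']; exact h
    obtain ⟨x, hx1, hx2, hx3⟩ := isPreconnected_closed_iff.mp hξ (Cζ ∪ Dζ) Cξ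
      (hCζc.union hDζc) hCξc
      (fun x _ => by
        rcases hMcov x with h | h
        · exact Or.inl (Or.inr (hLsub h))
        · rcases hKcov h with h' | h'
          · exact Or.inl (Or.inl h')
          · exact Or.inr h')
      ⟨ζ, fun h => hζξ (mem_singleton_iff.mp h), Or.inl hζCζ⟩
      ⟨p, fun h => hpξ (mem_singleton_iff.mp h), hpCξ⟩
    rcases hx2 with h | h
    · exact absurd (mem_inter h hx3) (by rw [hCC]; exact notMem_empty x)
    · rcases hLK (mem_inter (hDζL h) (hCξK hx3)) with h' | h'
      · exact hζCξ (h' ▸ hx3)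
      · exact hx1 h'
  · -- Dζ and Dξ are disjoint; η lies in one of them
    have hDD : Dζ ∩ Dξ = ∅ := hDdisj hcase2
    have hξDζ : ξ ∉ Dζ := hcase2
    have hζDξ : ζ ∉ Dξ := fun h =>
      absurd (mem_inter hζDζ h) (by rw [hDD]; exact notMem_empty ζ)
    rcases hLcov (Or.inl hηU) with hηD | hηD
    · -- η ∈ Dζ : contradict ζ being a non-cut point
      obtain ⟨x, hx1, hx2, hx3⟩ := isPreconnected_closed_iff.mp hζ (Dζ ∪ Cζ) (Dξ ∪ Cξ)
        (hDζc.union hCζc) (hDξc.union hCξc)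
        (fun x _ => by
          rcases hMcov x with h | h
          · rcases hLcov h with h' | h'
            · exact Or.inl (Or.inl h')
            · exact Or.inr (Or.inl h')
          · rcases hKcov h with h' | h'
            · exact Or.inl (Or.inr h')
            · exact Or.inr (Or.inr h'))
        ⟨η, fun h => hηζ (mem_singleton_iff.mp h), Or.inl hηD⟩
        ⟨ξ, fun h => hζξ (mem_singleton_iff.mp h).symm, Or.inr hξCξ⟩
      have hxζ : x ≠ ζ := fun h => hx1 (mem_singleton_iff.mpr h)
      rcases hx2 with h2 | h2 <;> rcases hx3 with h3 | h3
      · exact absurd (mem_inter h2 h3) (by rw [hDD]; exact notMem_empty x)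
      · rcases hLK (mem_inter (hDζL h2) (hCξK h3)) with h' | h'
        · exact hxζ h'
        · exact hξDζ (h' ▸ h2)
      · rcases hLK (mem_inter (hDξL h3) (hCζK h2)) with h' | h'
        · exact hxζ h'
        · exact hξCζ (h' ▸ h2)
      · exact absurd (mem_inter h2 h3) (by rw [hCC]; exact notMem_empty x)
    · -- η ∈ Dξ : contradict ξ being a non-cut point
      obtain ⟨x, hx1, hx2, hx3⟩ := isPreconnected_closed_iff.mp hξ (Dξ ∪ Cξ) (Dζ ∪ Cζ)
        (hDξc.union hCξc) (hDζc.union hCζc)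
        (fun x _ => by
          rcases hMcov x with h | h
          · rcases hLcov h with h' | h'
            · exact Or.inr (Or.inl h')
            · exact Or.inl (Or.inl h')
          · rcases hKcov h with h' | h'
            · exact Or.inr (Or.inr h')
            · exact Or.inl (Or.inr h'))
        ⟨η, fun h => hηξ (mem_singleton_iff.mp h), Or.inl hηD⟩
        ⟨ζ, fun h => hζξ (mem_singleton_iff.mp h), Or.inr hζCζ⟩
      have hxξ : x ≠ ξ := fun h => hx1 (mem_singleton_iff.mpr h)
      rcases hx2 with h2 | h2 <;> rcases hx3 with h3 | h3
      · exact absurd (mem_inter h3 h2) (by rw [hDD]; exact notMem_empty x)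
      · rcases hLK (mem_inter (hDξL h2) (hCζK h3)) with h' | h'
        · exact hζDξ (h' ▸ h2)
        · exact hxξ h'
      · rcases hLK (mem_inter (hDζL h3) (hCξK h2)) with h' | h'
        · exact hζCξ (h' ▸ h2)
        · exact hxξ h'
      · exact absurd (mem_inter h3 h2) (by rw [hCC]; exact notMem_empty x)

/-- No cut point of a continuum separates the two points of a cut pair. -/
theorem stmt2 {M : Type*} [TopologicalSpace M] [CompactSpace M] [ConnectedSpace M]
    [TopologicalSpace.MetrizableSpace M]
    (ζ ξ η : M)
    (hζξ : IsCutPair M ζ ξ)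
    (hη : IsCutPoint M η)
    (hne : η ∉ ({ζ, ξ} : Set M)) :
    connectedComponentIn (({η} : Set M)ᶜ) ζ = connectedComponentIn (({η} : Set M)ᶜ) ξ := by
  obtain ⟨hne', hdis, hζcut, hξcut⟩ := hζξ
  rw [IsCutPoint, not_not] at hζcut hξcut
  unfold IsPreconnected at hdis
  push_neg at hdis
  obtain ⟨u, v, hu, hv, hcov, hne1, hne2, hempty⟩ := hdis
  set s : Set M := ({ζ, ξ} : Set M)ᶜ with hs
  have hsopen : IsOpen s := (Set.toFinite ({ζ, ξ} : Set M)).isClosed.isOpen_compl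
  set U : Set M := s ∩ u with hUdef
  set V : Set M := s ∩ v with hVdef
  have hUopen : IsOpen U := hsopen.inter hu
  have hVopen : IsOpen V := hsopen.inter hv
  have hUV : U ∩ V = ∅ := by
    rw [eq_empty_iff_forall_notMem]
    rintro x ⟨⟨hxs, hxu⟩, _, hxv⟩
    exact absurd (hempty ▸ ⟨hxs, hxu, hxv⟩ : x ∈ (∅ : Set M)) (notMem_empty x)
  have hUVcover : U ∪ V = s := by
    rw [hUdef, hVdef, ← inter_union_distrib_left]
    exact inter_eq_left.mpr hcov
  have hηs : η ∈ U ∪ V := by rw [hUVcover]; exact hne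
  have hC : ∃ C : Set M, IsPreconnected C ∧ C ⊆ ({η} : Set M)ᶜ ∧ ζ ∈ C ∧ ξ ∈ C := by
    rcases hηs with hηU | hηV
    · exact key ζ ξ η hne' hζcut hξcut U V hUopen hVopen hUV hUVcover hne2 hηU
    · exact key ζ ξ η hne' hζcut hξcut V U hVopen hUopen
        (by rw [inter_comm]; exact hUV) (by rw [union_comm]; exact hUVcover) hne1 hηV
  obtain ⟨C, hCp, hCsub, hζC, hξC⟩ := hC
  exact connectedComponentIn_eq (hCp.subset_connectedComponentIn hζC hCsub hξC)
end

section
/- Let a finitely generated group G act minimally (no proper invariant subtree) on two simplicial trees T and T' that are equivalent, i.e., each dominates the other via G-equivariant maps. If T' is acylindrical, then T is acylindrical. Here a G-tree is (k,C)-acylindrical if the pointwise stabilizer of every arc of length at least k+1 has order at most C, and acylindrical means (k,C)-acylindrical for some k and C. -/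
open SimpleGraph

variable {G : Type*} [Group G]

/-- A `G`-tree is `(k,C)`-acylindrical if the pointwise stabilizer of every arc (path)
of length at least `k+1` has order at most `C`. -/
def IsAcylindrical {V : Type*} [MulAction G V] (T : SimpleGraph V) (k C : ℕ) : Prop :=
  ∀ (u v : V) (p : T.Walk u v), p.IsPath → k + 1 ≤ p.length →
    {g : G | ∀ x ∈ p.support, g • x = x}.Finite ∧
    {g : G | ∀ x ∈ p.support, g • x = x}.ncard ≤ C

/-- The `G`-action on a tree is minimal: there is no proper nonempty invariant subtree. -/
def IsMinimalTreeAction {V : Type*} [MulAction G V] (T : SimpleGraph V) : Prop :=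
  ∀ S : Set V, S.Nonempty → (∀ (g : G), ∀ x ∈ S, g • x ∈ S) →
    (∀ x ∈ S, ∀ y ∈ S, ∃ p : T.Walk x y, ∀ z ∈ p.support, z ∈ S) → S = Set.univ

/-!
By domination there are equivariant maps `f : V → V'` and `f' : V' → V`. For a finitely
generated group, minimality forces cocompactness: the translates of walks from a base point
`x` to `s • x`, `s` running over a finite generating set, span an invariant connected
subgraph, which must be all of the tree. So there are finitely many orbits of vertices and
of edges; hence `f'` is Lipschitz and `f' ∘ f` stays at bounded distance from the identity,
which makes `f` expand long arcs of `T` to long arcs of `T'`. An element fixing an arc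
`[u, v]` of `T` fixes `f u` and `f v`, hence the whole geodesic `[f u, f v]` of `T'`, whose
pointwise stabiliser is bounded by acylindricity of `T'`.
-/

lemma MulAction.exists_equivariant_of_forall_exists_fixed {α β : Type*} [MulAction G α]
    [MulAction G β] (h : ∀ a : α, ∃ b : β, ∀ g ∈ MulAction.stabilizer G a, g • b = b) :
    ∃ f : α → β, ∀ (g : G) (a : α), f (g • a) = g • f a := by
  choose σ hσ using h
  let r (a : α) : α := (Quotient.mk (MulAction.orbitRel G α) a).out
  have hr (g : G) (a : α) : r (g • a) = r a :=
    congrArg Quotient.out (Quotient.sound (MulAction.mem_orbit a g))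
  choose c hc using fun a => MulAction.mem_orbit_symm.1
    (Quotient.mk_out (s := MulAction.orbitRel G α) a)
  replace hc : ∀ a, c a • r a = a := hc
  refine ⟨fun a => c a • σ (r a), fun g a => ?_⟩
  have hstab : (c a)⁻¹ * g⁻¹ * c (g • a) ∈ MulAction.stabilizer G (r a) := by
    rw [MulAction.mem_stabilizer_iff, mul_smul, mul_smul, ← hr g a, hc, inv_smul_smul, hr,
      inv_smul_eq_iff, hc]
  calc c (g • a) • σ (r (g • a))
      = (g * c a) • ((c a)⁻¹ * g⁻¹ * c (g • a)) • σ (r a) := by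
        rw [hr, smul_smul]; congr 1; group
    _ = g • c a • σ (r a) := by rw [hσ _ _ hstab, mul_smul]

lemma MulAction.bddAbove_image_of_forall_smul_mem {α : Type*} [MulAction G α] {K : Set α}
    (hK : K.Finite) {P : Set α} (hP : ∀ a ∈ P, ∃ g : G, g • a ∈ K) (φ : α → ℕ)
    (hφ : ∀ (g : G) (a : α), φ (g • a) = φ a) : BddAbove (φ '' P) := by
  obtain ⟨M, hM⟩ := (hK.image φ).bddAbove
  refine ⟨M, ?_⟩
  rintro _ ⟨a, ha, rfl⟩
  obtain ⟨g, hg⟩ := hP a ha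
  exact hφ g a ▸ hM ⟨_, hg, rfl⟩

namespace SimpleGraph

lemma IsAcyclic.length_eq_dist {V : Type*} {T : SimpleGraph V} (hT : T.IsAcyclic) {u v : V}
    {p : T.Walk u v} (hp : p.IsPath) : p.length = T.dist u v := by
  obtain ⟨q, hq, hlen⟩ := p.reachable.exists_path_of_dist
  rw [← hlen, Subtype.mk.inj ((hT.subsingleton_path u v).elim ⟨p, hp⟩ ⟨q, hq⟩)]

lemma Connected.dist_le_mul_dist_of_adj {V W : Type*} {T : SimpleGraph V} {H : SimpleGraph W}
    (hT : T.Connected) (hH : H.Connected) (f : V → W) {L : ℕ}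
    (hf : ∀ a b, T.Adj a b → H.dist (f a) (f b) ≤ L) (a b : V) :
    H.dist (f a) (f b) ≤ L * T.dist a b := by
  suffices h : ∀ {a b : V} (p : T.Walk a b), H.dist (f a) (f b) ≤ L * p.length by
    obtain ⟨p, hp⟩ := hT.exists_walk_length_eq_dist a b
    exact hp ▸ h p
  intro a b p
  induction p with
  | nil => simp
  | @cons a c b hac p ih =>
    calc H.dist (f a) (f b) ≤ H.dist (f a) (f c) + H.dist (f c) (f b) := hH.dist_triangle
      _ ≤ L + L * p.length := add_le_add (hf a c hac) ih
      _ = L * (Walk.cons hac p).length := by rw [Walk.length_cons]; ring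

lemma Connected.dist_le_add_mul_dist_map {V W : Type*} {T : SimpleGraph V} {H : SimpleGraph W}
    (hT : T.Connected) {f : V → W} {f' : W → V} {L M : ℕ}
    (hL : ∀ a b, T.dist (f' a) (f' b) ≤ L * H.dist a b) (hM : ∀ v, T.dist v (f' (f v)) ≤ M)
    (u v : V) : T.dist u v ≤ 2 * M + L * H.dist (f u) (f v) := by
  calc T.dist u v ≤ T.dist u (f' (f u)) + T.dist (f' (f u)) v := hT.dist_triangle
    _ ≤ T.dist u (f' (f u)) + (T.dist (f' (f u)) (f' (f v)) + T.dist (f' (f v)) v) := by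
      gcongr; exact hT.dist_triangle
    _ ≤ M + (L * H.dist (f u) (f v) + M) := by
      gcongr
      · exact hM u
      · exact hL _ _
      · exact dist_comm (G := T) ▸ hM v
    _ = 2 * M + L * H.dist (f u) (f v) := by ring

variable {V : Type*} [MulAction G V] {T : SimpleGraph V}

def smulHom (hadj : ∀ (g : G) (u v : V), T.Adj u v → T.Adj (g • u) (g • v)) (g : G) :
    T →g T where
  toFun := (g • ·)
  map_rel' := hadj g _ _

@[simp] lemma smulHom_apply (hadj : ∀ (g : G) (u v : V), T.Adj u v → T.Adj (g • u) (g • v))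
    (g : G) (v : V) : smulHom hadj g v = g • v := rfl

lemma Connected.dist_smul_smul (hT : T.Connected)
    (hadj : ∀ (g : G) (u v : V), T.Adj u v → T.Adj (g • u) (g • v)) (g : G) (u v : V) :
    T.dist (g • u) (g • v) = T.dist u v := by
  have dist_smul_le (g : G) (u v : V) : T.dist (g • u) (g • v) ≤ T.dist u v := by
    obtain ⟨p, hp⟩ := hT.exists_walk_length_eq_dist u v
    exact (dist_le (p.map (smulHom hadj g))).trans_eq (by rw [Walk.length_map, hp])
  refine le_antisymm (dist_smul_le g u v) ?_
  simpa using dist_smul_le g⁻¹ (g • u) (g • v)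

lemma IsAcyclic.smul_eq_of_mem_support (hT : T.IsAcyclic)
    (hadj : ∀ (g : G) (u v : V), T.Adj u v → T.Adj (g • u) (g • v))
    {u v : V} {p : T.Walk u v} (hp : p.IsPath) {g : G} (hu : g • u = u) (hv : g • v = v)
    {x : V} (hx : x ∈ p.support) : g • x = x := by
  have hq : ((p.map (smulHom hadj g)).copy (by simpa using hu) (by simpa using hv)).IsPath :=
    (Walk.isPath_copy _ _ _).2 (hp.map (MulAction.injective g))
  have hqp := Subtype.mk.inj ((hT.subsingleton_path u v).elim ⟨_, hq⟩ ⟨p, hp⟩)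
  have hsupport : p.support.map (smulHom hadj g) = p.support := by
    rw [← Walk.support_map, ← congrArg Walk.support hqp, Walk.support_copy]
  exact List.map_inj_left.1 (hsupport.trans (List.map_id _).symm) x hx

lemma reachable_smul_of_closure_eq_top {H : SimpleGraph V}
    (hH : ∀ (g : G) (u v : V), H.Adj u v → H.Adj (g • u) (g • v)) {S : Set G}
    (hS : Subgroup.closure S = ⊤) {x : V} (hx : ∀ s ∈ S, H.Reachable x (s • x)) (g : G) :
    H.Reachable x (g • x) := by
  have hg : g ∈ Subgroup.closure S := hS ▸ Subgroup.mem_top g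
  induction hg using Subgroup.closure_induction with
  | mem s hs => exact hx s hs
  | one => simp
  | mul g h _ _ hg hh =>
    simpa [mul_smul] using hg.trans (hh.map (smulHom hH g))
  | inv g _ hg =>
    simpa using (hg.map (smulHom hH g⁻¹)).symm

def translateSpan (T : SimpleGraph V) (K : Set V) : SimpleGraph V where
  Adj u v := T.Adj u v ∧ ∃ g : G, g • u ∈ K ∧ g • v ∈ K
  symm := ⟨fun _ _ ⟨h, g, hu, hv⟩ => ⟨h.symm, g, hv, hu⟩⟩
  loopless := ⟨fun _ h => h.1.ne rfl⟩

lemma translateSpan_le (K : Set V) : translateSpan (G := G) T K ≤ T := fun _ _ h => h.1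

lemma translateSpan_adj_smul (hadj : ∀ (g : G) (u v : V), T.Adj u v → T.Adj (g • u) (g • v))
    {K : Set V} (g : G) (u v : V) (h : (translateSpan (G := G) T K).Adj u v) :
    (translateSpan (G := G) T K).Adj (g • u) (g • v) := by
  obtain ⟨huv, g₀, hu, hv⟩ := h
  exact ⟨hadj g u v huv, g₀ * g⁻¹, by simpa [mul_smul] using hu,
    by simpa [mul_smul] using hv⟩

lemma Walk.reachable_translateSpan {K : Set V} {u v : V} (p : T.Walk u v)
    (hp : ∀ z ∈ p.support, z ∈ K) : (translateSpan (G := G) T K).Reachable u v := by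
  induction p with
  | nil => rfl
  | @cons a b c hab p ih =>
    have hK : a ∈ K ∧ b ∈ K := ⟨hp a (by simp), hp b (by simp)⟩
    have hspan : (translateSpan (G := G) T K).Adj a b := ⟨hab, 1, by simpa using hK⟩
    exact hspan.reachable.trans (ih fun z hz => hp z (by simp [hz]))

end SimpleGraph

section MinimalAction

variable {V W : Type*} [MulAction G V] [MulAction G W] {T : SimpleGraph V}

lemma IsMinimalTreeAction.eq_of_le (hmin : IsMinimalTreeAction (G := G) T) (hT : T.IsTree)
    {H : SimpleGraph V} (hHT : H ≤ T)
    (hH : ∀ (g : G) (u v : V), H.Adj u v → H.Adj (g • u) (g • v)) {x : V}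
    (hx : ∀ g : G, H.Reachable x (g • x)) : H = T := by
  have hreach : {v | H.Reachable x v} = Set.univ := by
    refine hmin _ ⟨x, Reachable.refl x⟩
      (fun g v hv => (hx g).trans (by simpa using hv.map (smulHom hH g))) ?_
    intro u hu v hv
    obtain ⟨p⟩ := hu.symm.trans hv
    refine ⟨p.mapLe hHT, fun z hz => ?_⟩
    obtain ⟨q, -, -⟩ := Walk.mem_support_iff_exists_append.1 (by simpa using hz)
    exact hu.trans ⟨q⟩
  have hconn : H.Connected := by
    have hx (v : V) : H.Reachable x v := Set.eq_univ_iff_forall.1 hreach v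
    have : Nonempty V := ⟨x⟩
    exact ⟨fun u v => (hx u).symm.trans (hx v)⟩
  exact (isTree_iff_minimal_connected.1 hT).eq_of_le hconn hHT

theorem IsMinimalTreeAction.exists_finite_smul_mem (hmin : IsMinimalTreeAction (G := G) T)
    (hT : T.IsTree) (hadj : ∀ (g : G) (u v : V), T.Adj u v → T.Adj (g • u) (g • v))
    (hFG : Group.FG G) :
    ∃ K : Set V, K.Finite ∧ (∀ v, ∃ g : G, g • v ∈ K) ∧
      ∀ u v, T.Adj u v → ∃ g : G, g • u ∈ K ∧ g • v ∈ K := by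
  obtain ⟨S, hS⟩ := hFG
  obtain ⟨x⟩ := hT.connected.nonempty
  let w (s : G) : T.Walk x (s • x) := (hT.connected x (s • x)).some
  let K : Set V := insert x (⋃ s ∈ S, {z | z ∈ (w s).support})
  have hK : K.Finite := (S.finite_toSet.biUnion fun s _ => (w s).support.finite_toSet).insert x
  have hspan : translateSpan (G := G) T K = T :=
    hmin.eq_of_le hT (translateSpan_le K) (translateSpan_adj_smul hadj)
      (reachable_smul_of_closure_eq_top (translateSpan_adj_smul hadj) hS fun s hs =>
        (w s).reachable_translateSpan fun z hz =>
          Set.mem_insert_of_mem x (Set.mem_biUnion hs hz))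
  have hedge (u v : V) (huv : T.Adj u v) : ∃ g : G, g • u ∈ K ∧ g • v ∈ K :=
    (hspan.symm ▸ huv : (translateSpan (G := G) T K).Adj u v).2
  refine ⟨K, hK, fun v => ?_, hedge⟩
  obtain ⟨p⟩ := hT.connected.preconnected v x
  cases p with
  | nil => exact ⟨1, by simp [K]⟩
  | cons h _ => exact (hedge _ _ h).imp fun _ => And.left

theorem IsMinimalTreeAction.exists_dist_map_le_mul_dist (hmin : IsMinimalTreeAction (G := G) T)
    (hT : T.IsTree) (hadj : ∀ (g : G) (u v : V), T.Adj u v → T.Adj (g • u) (g • v))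
    (hFG : Group.FG G) {H : SimpleGraph W} (hH : H.Connected)
    (hadjH : ∀ (g : G) (u v : W), H.Adj u v → H.Adj (g • u) (g • v)) {f : V → W}
    (hf : ∀ (g : G) (v : V), f (g • v) = g • f v) :
    ∃ L, ∀ a b, H.dist (f a) (f b) ≤ L * T.dist a b := by
  obtain ⟨K, hK, -, hKedge⟩ := hmin.exists_finite_smul_mem hT hadj hFG
  obtain ⟨L, hL⟩ := MulAction.bddAbove_image_of_forall_smul_mem (hK.prod hK)
    (P := {e : V × V | T.Adj e.1 e.2}) (fun e he => hKedge e.1 e.2 he)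
    (fun e => H.dist (f e.1) (f e.2)) (fun g e => by simp [hf, hH.dist_smul_smul hadjH])
  exact ⟨L, hT.connected.dist_le_mul_dist_of_adj hH f fun a b hab => hL ⟨(a, b), hab, rfl⟩⟩

theorem IsMinimalTreeAction.exists_forall_dist_le_of_equivariant
    (hmin : IsMinimalTreeAction (G := G) T) (hT : T.IsTree)
    (hadj : ∀ (g : G) (u v : V), T.Adj u v → T.Adj (g • u) (g • v))
    (hFG : Group.FG G) {φ : V → V} (hφ : ∀ (g : G) (v : V), φ (g • v) = g • φ v) :
    ∃ M, ∀ v, T.dist v (φ v) ≤ M := by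
  obtain ⟨K, hK, hKvert, -⟩ := hmin.exists_finite_smul_mem hT hadj hFG
  obtain ⟨M, hM⟩ := MulAction.bddAbove_image_of_forall_smul_mem hK (P := Set.univ)
    (fun v _ => hKvert v) (fun v => T.dist v (φ v))
    (fun g v => by simp [hφ, hT.connected.dist_smul_smul hadj])
  exact ⟨M, fun v => hM ⟨v, Set.mem_univ v, rfl⟩⟩

end MinimalAction

lemma IsAcylindrical.of_forall_isPath {V V' : Type*} [MulAction G V] [MulAction G V']
    {T : SimpleGraph V} {T' : SimpleGraph V'} {k' C : ℕ} (hac : IsAcylindrical (G := G) T' k' C)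
    {k : ℕ} (h : ∀ (u v : V) (p : T.Walk u v), p.IsPath → k + 1 ≤ p.length →
      ∃ (u' v' : V') (q : T'.Walk u' v'), q.IsPath ∧ k' + 1 ≤ q.length ∧
        ∀ g : G, (∀ x ∈ p.support, g • x = x) → ∀ y ∈ q.support, g • y = y) :
    IsAcylindrical (G := G) T k C := by
  intro u v p hp hlen
  obtain ⟨u', v', q, hq, hqlen, hfix⟩ := h u v p hp hlen
  obtain ⟨hfin, hcard⟩ := hac u' v' q hq hqlen
  exact ⟨hfin.subset hfix, (Set.ncard_le_ncard hfix hfin).trans hcard⟩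

/-- If a finitely generated group acts minimally on two equivalent simplicial trees
(each dominating the other: every vertex stabilizer of one fixes a vertex of the other),
and one of them is acylindrical, then so is the other. -/
theorem stmt5 {V V' : Type*} [MulAction G V] [MulAction G V']
    (hFG : Group.FG G)
    (T : SimpleGraph V) (T' : SimpleGraph V')
    (hTtree : T.IsTree) (hT'tree : T'.IsTree)
    (hadj : ∀ (g : G) (u v : V), T.Adj u v → T.Adj (g • u) (g • v))
    (hadj' : ∀ (g : G) (u v : V'), T'.Adj u v → T'.Adj (g • u) (g • v))
    (hmin : IsMinimalTreeAction (G := G) T) (hmin' : IsMinimalTreeAction (G := G) T')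
    (hdom : ∀ v : V, ∃ v' : V', ∀ g ∈ MulAction.stabilizer G v, g • v' = v')
    (hdom' : ∀ v' : V', ∃ v : V, ∀ g ∈ MulAction.stabilizer G v', g • v = v)
    (hacyl' : ∃ k C : ℕ, IsAcylindrical (G := G) T' k C) :
    ∃ k C : ℕ, IsAcylindrical (G := G) T k C := by
  obtain ⟨k', C, hac⟩ := hacyl'
  obtain ⟨f, hf⟩ := MulAction.exists_equivariant_of_forall_exists_fixed hdom
  obtain ⟨f', hf'⟩ := MulAction.exists_equivariant_of_forall_exists_fixed hdom'
  obtain ⟨L, hL⟩ :=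
    hmin'.exists_dist_map_le_mul_dist hT'tree hadj' hFG hTtree.connected hadj hf'
  obtain ⟨M, hM⟩ := hmin.exists_forall_dist_le_of_equivariant hTtree hadj hFG (φ := f' ∘ f)
    fun g v => by simp [hf, hf']
  refine ⟨2 * M + L * (k' + 1), C, hac.of_forall_isPath fun u v p hp hlen => ?_⟩
  obtain ⟨q, hq, hqlen⟩ := hT'tree.connected.exists_path_of_dist (f u) (f v)
  refine ⟨f u, f v, q, hq, ?_, fun g hg y hy => ?_⟩
  · have hcoarse := hTtree.connected.dist_le_add_mul_dist_map hL hM u v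
    rw [hTtree.isAcyclic.length_eq_dist hp] at hlen
    rw [hqlen]
    exact (Nat.lt_of_mul_lt_mul_left (a := L) (b := k' + 1) (by omega)).le
  · refine hT'tree.isAcyclic.smul_eq_of_mem_support hadj' hq ?_ ?_ hy
    · rw [← hf, hg u p.start_mem_support]
    · rw [← hf, hg v p.end_mem_support]
end

section
/- Let T be a simplicial tree and let ∼ be an equivalence relation on the edge set of T such that any two edges lying on a common path between two ∼-equivalent edges are also ∼-equivalent to them (i.e., each equivalence class spans a subtree, its cylinder). Define the tree of cylinders T_c as the bipartite graph with vertex set V ⊔ W, where V is the set of cylinders and W is the set of vertices of T belonging to at least two distinct cylinders, with v ∈ V adjacent to w ∈ W iff w ∈ v. Then T_c is a tree. -/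
/-!
Every cylinder is convex: if `u, v ∈ Cyl e`, extending the `T`-path from `u` to `v` by an edge
of the class of `e` at each end gives a path whose end edges are equivalent, so all its edges are
equivalent to `e`.

Connectedness: cylinders of adjacent edges of `T` share a vertex, so they are equal or joined
through that shared vertex in the tree of cylinders; walking along `T` joins any two cylinders.

Acyclicity: a path `w₀ S₁ w₁ ⋯ Sₖ wₖ` of the tree of cylinders lifts, by concatenating the
`T`-paths from `wᵢ₋₁` to `wᵢ` (which lie in `Sᵢ` by convexity), to a walk of `T` that never
backtracks, because consecutive pieces meet along edges of distinct cylinders. In a tree such a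
walk is a path, and its first edge lies in `S₁`. A cycle `w S₁ w₁ S₂ ⋯ w` would thus give a
nonempty `T`-path from `w₁` to `w` whose first edge has cylinder `S₂`, while convexity of `S₁`
gives it cylinder `S₁`.
-/

open SimpleGraph

variable {V : Type*}

/-- The cylinder of an edge `e`: the set of vertices spanned by the edges equivalent to `e`. -/
def Cyl (T : SimpleGraph V) (r : Sym2 V → Sym2 V → Prop) (e : Sym2 V) : Set V :=
  {w : V | ∃ e' ∈ T.edgeSet, r e e' ∧ w ∈ e'}

/-- The set of cylinders of `(T, r)`. -/
def Cylinders (T : SimpleGraph V) (r : Sym2 V → Sym2 V → Prop) : Set (Set V) :=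
  {S : Set V | ∃ e ∈ T.edgeSet, S = Cyl T r e}

/-- The set of vertices of `T` belonging to at least two distinct cylinders. -/
def SharedVertices (T : SimpleGraph V) (r : Sym2 V → Sym2 V → Prop) : Set V :=
  {w : V | ∃ S₁ ∈ Cylinders T r, ∃ S₂ ∈ Cylinders T r, S₁ ≠ S₂ ∧ w ∈ S₁ ∧ w ∈ S₂}

/-- The tree of cylinders: the bipartite graph on cylinders and shared vertices, with a
cylinder adjacent to a vertex iff the vertex belongs to the cylinder. -/
def treeOfCylinders (T : SimpleGraph V) (r : Sym2 V → Sym2 V → Prop) :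
    SimpleGraph (↥(Cylinders T r) ⊕ ↥(SharedVertices T r)) :=
  SimpleGraph.fromRel (fun a b =>
    ∃ (S : ↥(Cylinders T r)) (w : ↥(SharedVertices T r)),
      a = Sum.inl S ∧ b = Sum.inr w ∧ (w : V) ∈ (S : Set V))

namespace SimpleGraph

variable {G : SimpleGraph V} {u v x y : V}

theorem Walk.exists_edges_head?_eq_some_of_ne (p : G.Walk u v) (h : u ≠ v) :
    ∃ e, p.edges.head? = some e := by
  cases p with
  | nil => exact absurd rfl h
  | cons _ _ => exact ⟨_, rfl⟩

theorem IsAcyclic.edges_head?_eq_of_adj_start (hG : G.IsAcyclic) {p : G.Walk u v}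
    (hp : p.IsPath) (hadj : G.Adj u x) (hx : x ∈ p.support) : p.edges.head? = some s(u, x) := by
  cases p with
  | nil => exact absurd (by simpa using hx) hadj.ne'
  | cons _ _ => simp [hG.eq_snd_of_adj_start hp hadj hx]

theorem IsAcyclic.exists_isPath_edges_head?_eq (hG : G.IsAcyclic) {p : G.Walk u v}
    (hp : p.IsPath) (hadj : G.Adj u x) :
    ∃ (a : V) (q : G.Walk a v), q.IsPath ∧ q.edges.head? = some s(u, x) ∧ p.edges <:+ q.edges := by
  by_cases hx : x ∈ p.support
  · exact ⟨u, p, hp, hG.edges_head?_eq_of_adj_start hp hadj hx, List.suffix_refl _⟩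
  · exact ⟨x, .cons hadj.symm p, hp.cons hx, by simp [Sym2.eq_swap], by simp⟩

theorem IsAcyclic.exists_isPath_edges_getLast?_eq (hG : G.IsAcyclic) {p : G.Walk u v}
    (hp : p.IsPath) (hadj : G.Adj v x) :
    ∃ (b : V) (q : G.Walk u b), q.IsPath ∧ q.edges.getLast? = some s(v, x) ∧
      p.edges <+: q.edges := by
  obtain ⟨b, q, hq, hhead, hsuffix⟩ := hG.exists_isPath_edges_head?_eq hp.reverse hadj
  refine ⟨b, q.reverse, hq.reverse, by simpa using hhead, ?_⟩
  rw [Walk.edges_reverse, ← List.reverse_prefix, List.reverse_reverse] at hsuffix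
  simpa using hsuffix

theorem IsAcyclic.exists_isPath_edges_head?_getLast?_eq (hG : G.IsAcyclic) {p : G.Walk u v}
    (hp : p.IsPath) (hu : G.Adj u x) (hv : G.Adj v y) :
    ∃ (a b : V) (q : G.Walk a b), q.IsPath ∧ q.edges.head? = some s(u, x) ∧
      q.edges.getLast? = some s(v, y) ∧ p.edges ⊆ q.edges := by
  obtain ⟨a, q₁, hq₁, hhead, hsuffix⟩ := hG.exists_isPath_edges_head?_eq hp hu
  obtain ⟨b, q₂, hq₂, hlast, ⟨t, ht⟩⟩ := hG.exists_isPath_edges_getLast?_eq hq₁ hv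
  refine ⟨a, b, q₂, hq₂, ?_, hlast, fun e he => ht ▸ List.mem_append_left t (hsuffix.subset he)⟩
  rw [← ht, List.head?_append, hhead]
  rfl

theorem IsAcyclic.isPath_append (hG : G.IsAcyclic) {w : V} {p : G.Walk u v} {q : G.Walk v w}
    (hp : p.IsPath) (hq : q.IsPath) (h : ∀ e ∈ p.edges.getLast?, ∀ f ∈ q.edges.head?, e ≠ f) :
    (p.append q).IsPath := by
  rw [hG.isPath_iff_isChain, Walk.edges_append, List.isChain_append]
  exact ⟨(hG.isPath_iff_isChain p).mp hp, (hG.isPath_iff_isChain q).mp hq, h⟩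

end SimpleGraph

section TreeOfCylinders

variable {T : SimpleGraph V} {r : Sym2 V → Sym2 V → Prop}
  (hrefl : ∀ e ∈ T.edgeSet, r e e)
  (hsymm : ∀ e e' : Sym2 V, r e e' → r e' e)
  (htrans : ∀ e e' e'' : Sym2 V, r e e' → r e' e'' → r e e'')
  (hconn : ∀ (u v : V) (p : T.Walk u v), p.IsPath →
    ∀ e₁ e₂ : Sym2 V, p.edges.head? = some e₁ → p.edges.getLast? = some e₂ →
      r e₁ e₂ → ∀ e ∈ p.edges, r e e₁)

theorem cyl_mem_cylinders {e : Sym2 V} (he : e ∈ T.edgeSet) : Cyl T r e ∈ Cylinders T r :=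
  ⟨e, he, rfl⟩

include hrefl in
theorem mem_cyl_of_mem {e : Sym2 V} (he : e ∈ T.edgeSet) {x : V} (hx : x ∈ e) :
    x ∈ Cyl T r e :=
  ⟨e, he, hrefl e he, hx⟩

include hrefl in
theorem nonempty_of_mem_cylinders {S : Set V} (hS : S ∈ Cylinders T r) : S.Nonempty := by
  obtain ⟨e, he, rfl⟩ := hS
  exact ⟨_, mem_cyl_of_mem hrefl he e.out_fst_mem⟩

include hsymm htrans in
theorem cyl_eq_of_rel {e f : Sym2 V} (h : r e f) : Cyl T r f = Cyl T r e := by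
  ext x
  exact ⟨fun ⟨g, hg, hfg, hx⟩ => ⟨g, hg, htrans _ _ _ h hfg, hx⟩,
    fun ⟨g, hg, heg, hx⟩ => ⟨g, hg, htrans _ _ _ (hsymm _ _ h) heg, hx⟩⟩

include hsymm htrans hconn in
theorem rel_of_mem_edges_of_mem_cyl (hT : T.IsAcyclic) {e : Sym2 V} {u v : V}
    (hu : u ∈ Cyl T r e) (hv : v ∈ Cyl T r e) {p : T.Walk u v} (hp : p.IsPath) {g : Sym2 V}
    (hg : g ∈ p.edges) : r e g := by
  obtain ⟨e₁, he₁, hee₁, hue₁⟩ := hu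
  obtain ⟨e₂, he₂, hee₂, hve₂⟩ := hv
  obtain ⟨x, rfl⟩ := Sym2.mem_iff_exists.mp hue₁
  obtain ⟨y, rfl⟩ := Sym2.mem_iff_exists.mp hve₂
  obtain ⟨a, b, q, hq, hhead, hlast, hsub⟩ :=
    hT.exists_isPath_edges_head?_getLast?_eq hp (T.mem_edgeSet.mp he₁) (T.mem_edgeSet.mp he₂)
  have hge₁ := hconn a b q hq _ _ hhead hlast (htrans _ _ _ (hsymm _ _ hee₁) hee₂) g (hsub hg)
  exact htrans _ _ _ hee₁ (hsymm _ _ hge₁)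

include hsymm htrans hconn in
theorem cyl_eq_of_mem_edges (hT : T.IsAcyclic) {S : Set V} (hS : S ∈ Cylinders T r) {u v : V}
    (hu : u ∈ S) (hv : v ∈ S) {p : T.Walk u v} (hp : p.IsPath) {g : Sym2 V}
    (hg : g ∈ p.edges) : Cyl T r g = S := by
  obtain ⟨e, -, rfl⟩ := hS
  exact cyl_eq_of_rel hsymm htrans (rel_of_mem_edges_of_mem_cyl hsymm htrans hconn hT hu hv hp hg)

include hsymm htrans hconn in
theorem exists_isPath_forall_cyl_eq (hT : T.IsTree) {S : Set V} (hS : S ∈ Cylinders T r)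
    {u v : V} (hu : u ∈ S) (hv : v ∈ S) :
    ∃ P : T.Walk u v, P.IsPath ∧ ∀ g ∈ P.edges, Cyl T r g = S := by
  obtain ⟨P, hP, -⟩ := hT.existsUnique_path u v
  exact ⟨P, hP, fun g hg => cyl_eq_of_mem_edges hsymm htrans hconn hT.isAcyclic hS hu hv hP hg⟩

@[simp]
theorem treeOfCylinders_adj_inl_inr {S : Cylinders T r} {w : SharedVertices T r} :
    (treeOfCylinders T r).Adj (.inl S) (.inr w) ↔ (w : V) ∈ (S : Set V) := by
  simp [treeOfCylinders]

@[simp]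
theorem treeOfCylinders_adj_inr_inl {S : Cylinders T r} {w : SharedVertices T r} :
    (treeOfCylinders T r).Adj (.inr w) (.inl S) ↔ (w : V) ∈ (S : Set V) := by
  simp [treeOfCylinders]

@[simp]
theorem not_treeOfCylinders_adj_inl_inl {S S' : Cylinders T r} :
    ¬ (treeOfCylinders T r).Adj (.inl S) (.inl S') := by
  simp [treeOfCylinders]

@[simp]
theorem not_treeOfCylinders_adj_inr_inr {w w' : SharedVertices T r} :
    ¬ (treeOfCylinders T r).Adj (.inr w) (.inr w') := by
  simp [treeOfCylinders]

theorem treeOfCylinders_reachable_of_mem {S S' : Cylinders T r} {x : V} (hx : x ∈ (S : Set V))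
    (hx' : x ∈ (S' : Set V)) : (treeOfCylinders T r).Reachable (.inl S) (.inl S') := by
  by_cases h : S = S'
  · rw [h]
  · let w : SharedVertices T r := ⟨x, S, S.2, S', S'.2, Subtype.coe_ne_coe.mpr h, hx, hx'⟩
    have hw : (treeOfCylinders T r).Adj (.inl S) (.inr w) := treeOfCylinders_adj_inl_inr.mpr hx
    have hw' : (treeOfCylinders T r).Adj (.inr w) (.inl S') := treeOfCylinders_adj_inr_inl.mpr hx'
    exact hw.reachable.trans hw'.reachable

include hrefl in
theorem treeOfCylinders_reachable_of_walk {u v : V} (p : T.Walk u v) {S S' : Cylinders T r}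
    (hu : u ∈ (S : Set V)) (hv : v ∈ (S' : Set V)) :
    (treeOfCylinders T r).Reachable (.inl S) (.inl S') := by
  induction p generalizing S with
  | nil => exact treeOfCylinders_reachable_of_mem hu hv
  | cons h p ih =>
    have he := T.mem_edgeSet.mpr h
    let C : Cylinders T r := ⟨_, cyl_mem_cylinders he⟩
    exact (treeOfCylinders_reachable_of_mem (S' := C) hu
      (mem_cyl_of_mem hrefl he (Sym2.mem_mk_left _ _))).trans
      (ih (S := C) (mem_cyl_of_mem hrefl he (Sym2.mem_mk_right _ _)) hv)

include hrefl in
theorem treeOfCylinders_connected (hT : T.Connected) (hne : T.edgeSet.Nonempty) :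
    (treeOfCylinders T r).Connected := by
  have hcyl : ∀ a, ∃ S : Cylinders T r, (treeOfCylinders T r).Reachable a (.inl S) := by
    rintro (S | ⟨w, S, hS, -, -, -, hw, -⟩)
    · exact ⟨S, .rfl⟩
    · exact ⟨⟨S, hS⟩, (treeOfCylinders_adj_inr_inl.mpr hw).reachable⟩
  have hreach (S S' : Cylinders T r) : (treeOfCylinders T r).Reachable (.inl S) (.inl S') := by
    obtain ⟨x, hx⟩ := nonempty_of_mem_cylinders hrefl S.2
    obtain ⟨y, hy⟩ := nonempty_of_mem_cylinders hrefl S'.2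
    exact treeOfCylinders_reachable_of_walk hrefl (hT.preconnected x y).some hx hy
  obtain ⟨e, he⟩ := hne
  refine (connected_iff _).mpr ⟨fun a b => ?_, ⟨.inl ⟨_, cyl_mem_cylinders he⟩⟩⟩
  obtain ⟨S, ha⟩ := hcyl a
  obtain ⟨S', hb⟩ := hcyl b
  exact ha.trans ((hreach S S').trans hb.symm)

include hsymm htrans hconn in
theorem exists_isPath_head_cyl_eq_of_isPath_cons (hT : T.IsTree) :
    ∀ {S : Cylinders T r} {w w' : SharedVertices T r}
      (h : (treeOfCylinders T r).Adj (.inr w) (.inl S))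
      (q : (treeOfCylinders T r).Walk (.inl S) (.inr w')), (Walk.cons h q).IsPath →
      ∃ P : T.Walk w w', P.IsPath ∧ ∃ g ∈ P.edges.head?, Cyl T r g = S
  | S, w, w', h, .cons (v := .inr _) h₁ .nil, hq => by
    have hne : (w : V) ≠ w' := by simp_all [Subtype.coe_ne_coe]
    obtain ⟨P, hP, hPS⟩ := exists_isPath_forall_cyl_eq hsymm htrans hconn hT S.2
      (treeOfCylinders_adj_inr_inl.mp h) (treeOfCylinders_adj_inl_inr.mp h₁)
    obtain ⟨g, hg⟩ := P.exists_edges_head?_eq_some_of_ne hne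
    exact ⟨P, hP, g, hg, hPS g (List.mem_of_mem_head? hg)⟩
  | S, w, w', h, .cons (v := .inr w₁) h₁ (.cons (v := .inl S') h₂ q), hq => by
    have hne : (w : V) ≠ w₁ := by simp_all [Subtype.coe_ne_coe]
    have hSS' : S ≠ S' := by
      rintro rfl
      exact ((Walk.cons_isPath_iff _ _).mp hq.of_cons).2 (by simp)
    obtain ⟨P₂, hP₂, g₂, hg₂, hg₂S'⟩ :=
      exists_isPath_head_cyl_eq_of_isPath_cons hT h₂ q hq.of_cons.of_cons
    obtain ⟨P₁, hP₁, hP₁S⟩ := exists_isPath_forall_cyl_eq hsymm htrans hconn hT S.2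
      (treeOfCylinders_adj_inr_inl.mp h) (treeOfCylinders_adj_inl_inr.mp h₁)
    obtain ⟨g₁, hg₁⟩ := P₁.exists_edges_head?_eq_some_of_ne hne
    refine ⟨P₁.append P₂, hT.isAcyclic.isPath_append hP₁ hP₂ ?_, g₁, ?_, hP₁S g₁ ?_⟩
    · intro e he f hf hef
      rw [Option.mem_def, hg₂, Option.some_inj] at hf
      apply hSS'
      apply Subtype.ext
      rw [← hP₁S e (List.mem_of_mem_getLast? he), hef, ← hf, hg₂S']
    · simp [Walk.edges_append, List.head?_append, hg₁]
    · exact List.mem_of_mem_head? hg₁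
  | _, _, _, _, .cons (v := .inl _) h₁ _, _ => absurd h₁ (by simp)
  | _, _, _, _, .cons (v := .inr _) _ (.cons (v := .inr _) h₂ _), _ => absurd h₂ (by simp)

include hsymm htrans hconn in
theorem not_isCycle_treeOfCylinders_inr (hT : T.IsTree) {w : SharedVertices T r} :
    ∀ c : (treeOfCylinders T r).Walk (.inr w) (.inr w), ¬ c.IsCycle
  | .cons (v := .inl S₁) h₁ (.cons (v := .inr w₁) h₂ (.cons (v := .inl S₂) h₃ q)), hc => by
    have hq := ((Walk.cons_isCycle_iff _ _).mp hc).1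
    have hS₁S₂ : S₁ ≠ S₂ := by
      rintro rfl
      exact ((Walk.cons_isPath_iff _ _).mp hq).2 (by simp)
    obtain ⟨P, hP, g, hg, hgS₂⟩ :=
      exists_isPath_head_cyl_eq_of_isPath_cons hsymm htrans hconn hT h₃ q hq.of_cons
    have hgS₁ := cyl_eq_of_mem_edges hsymm htrans hconn hT.isAcyclic S₁.2
      (treeOfCylinders_adj_inl_inr.mp h₂) (treeOfCylinders_adj_inr_inl.mp h₁) hP
      (List.mem_of_mem_head? hg)
    exact hS₁S₂ (Subtype.ext (hgS₁.symm.trans hgS₂))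
  | .cons (v := .inl _) _ (.cons (v := .inr _) _ .nil), hc => by
    simpa using hc.three_le_length
  | .nil, hc => Walk.not_isCycle_nil hc
  | .cons (v := .inr _) h₁ _, _ => absurd h₁ (by simp)
  | .cons (v := .inl _) _ (.cons (v := .inl _) h₂ _), _ => absurd h₂ (by simp)
  | .cons (v := .inl _) _ (.cons (v := .inr _) _ (.cons (v := .inr _) h₃ _)), _ =>
    absurd h₃ (by simp)

include hsymm htrans hconn in
theorem treeOfCylinders_isAcyclic (hT : T.IsTree) : (treeOfCylinders T r).IsAcyclic := by
  classical
  intro a c hc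
  obtain ⟨w, hw⟩ : ∃ w, .inr w ∈ c.support := match a, c, hc with
    | .inr w, c, _ => ⟨w, c.start_mem_support⟩
    | .inl _, .cons (v := .inr w) _ _, _ => ⟨w, by simp⟩
    | .inl _, .cons (v := .inl _) h _, _ => absurd h (by simp)
    | .inl _, .nil, hc => absurd hc Walk.not_isCycle_nil
  exact not_isCycle_treeOfCylinders_inr hsymm htrans hconn hT _ (hc.rotate hw)

end TreeOfCylinders

theorem stmt11_general (T : SimpleGraph V) (hT : T.IsTree)
    (r : Sym2 V → Sym2 V → Prop)
    (hne : T.edgeSet.Nonempty)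
    (hrefl : ∀ e ∈ T.edgeSet, r e e)
    (hsymm : ∀ e e' : Sym2 V, r e e' → r e' e)
    (htrans : ∀ e e' e'' : Sym2 V, r e e' → r e' e'' → r e e'')
    (hconn : ∀ (u v : V) (p : T.Walk u v), p.IsPath →
      ∀ e₁ e₂ : Sym2 V, p.edges.head? = some e₁ → p.edges.getLast? = some e₂ →
        r e₁ e₂ → ∀ e ∈ p.edges, r e e₁) :
    (treeOfCylinders T r).IsTree :=
  ⟨treeOfCylinders_connected hrefl hT.connected hne,
    treeOfCylinders_isAcyclic hsymm htrans hconn hT⟩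

/-- If `T` is a tree and `r` is an equivalence relation on the edges of `T` each of whose
classes spans a subtree (any edge on a path between two equivalent edges is equivalent to
them), then the tree of cylinders is a tree. -/
theorem stmt11 (T : SimpleGraph V) (hT : T.IsTree)
    (r : Sym2 V → Sym2 V → Prop)
    (hne : T.edgeSet.Nonempty)
    (hdom : ∀ e e' : Sym2 V, r e e' → e ∈ T.edgeSet ∧ e' ∈ T.edgeSet)
    (hrefl : ∀ e ∈ T.edgeSet, r e e)
    (hsymm : ∀ e e' : Sym2 V, r e e' → r e' e)
    (htrans : ∀ e e' e'' : Sym2 V, r e e' → r e' e'' → r e e'')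
    (hconn : ∀ (u v : V) (p : T.Walk u v), p.IsPath →
      ∀ e₁ e₂ : Sym2 V, p.edges.head? = some e₁ → p.edges.getLast? = some e₂ →
        r e₁ e₂ → ∀ e ∈ p.edges, r e e₁) :
    (treeOfCylinders T r).IsTree :=
  stmt11_general T hT r hne hrefl hsymm htrans hconn
end

section
/- Let M be a Peano continuum (compact, connected, locally connected, metrizable). Then every cut pair {ζ,ξ} of M has only finitely many complementary components, and ζ and ξ both lie in the closure of each component of M \ {ζ,ξ}. -/
/-!
The components of `U = M \ {ζ, ξ}` are open, by local connectedness. If `ζ` were not in the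
closure of a component `C`, then `C` would be clopen in the connected set `M \ {ξ}`; hence both
points lie in the closure of every component. Consequently no component fits inside the union
`A ∪ B` of disjoint open neighbourhoods of `ζ` and `ξ`, so the open cover of the compact set
`M \ (A ∪ B)` by the components is a cover by pairwise disjoint sets that all meet it, and a
finite subcover must contain every one of them.
-/

open Set

section LocallyConnected

variable {M : Type*} [TopologicalSpace M]

theorem closure_connectedComponentIn_inter_subset [LocallyConnectedSpace M] {U : Set M}
    (hU : IsOpen U) (x : M) :
    closure (connectedComponentIn U x) ∩ U ⊆ connectedComponentIn U x := by
  rintro y ⟨hy, hyU⟩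
  obtain ⟨z, hzy, hzx⟩ := mem_closure_iff_nhds.mp hy _
    (hU.connectedComponentIn.mem_nhds (mem_connectedComponentIn hyU))
  rw [connectedComponentIn_eq hzx, ← connectedComponentIn_eq hzy]
  exact mem_connectedComponentIn hyU

theorem exists_mem_diff_mem_closure_connectedComponentIn [LocallyConnectedSpace M]
    {U V : Set M} (hV : IsPreconnected V) (hU : IsOpen U) (hUV : U ⊆ V) {x : M} (hx : x ∈ U)
    (hVU : (V \ U).Nonempty) :
    ∃ p ∈ V \ U, p ∈ closure (connectedComponentIn U x) := by
  set C := connectedComponentIn U x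
  by_contra! hC
  have hcover : V ⊆ C ∪ (closure C)ᶜ := by
    intro y hyV
    by_cases hyC : y ∈ closure C
    · by_cases hyU : y ∈ U
      · exact Or.inl (closure_connectedComponentIn_inter_subset hU x ⟨hyC, hyU⟩)
      · exact absurd hyC (hC y ⟨hyV, hyU⟩)
    · exact Or.inr hyC
  obtain ⟨p, hp⟩ := hVU
  obtain ⟨y, -, hyC, hyC'⟩ := hV C (closure C)ᶜ hU.connectedComponentIn
    isClosed_closure.isOpen_compl hcover ⟨x, hUV hx, mem_connectedComponentIn hx⟩
    ⟨p, hp.1, hC p hp⟩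
  exact hyC' (subset_closure hyC)

theorem IsPreconnected.not_subset_union_of_mem_closure {C A B : Set M} (hC : IsPreconnected C)
    (hA : IsOpen A) (hB : IsOpen B) (hAB : Disjoint A B) {a b : M} (ha : a ∈ A) (hb : b ∈ B)
    (haC : a ∈ closure C) (hbC : b ∈ closure C) : ¬ C ⊆ A ∪ B := by
  intro hsub
  rcases hC.subset_or_subset hA hB hAB hsub with hCA | hCB
  · exact (hAB.closure_left hB).notMem_of_mem_left (closure_mono hCA hbC) hb
  · exact (hAB.symm.closure_left hA).notMem_of_mem_left (closure_mono hCB haC) ha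

theorem finite_connectedComponentIn_of_not_subset [LocallyConnectedSpace M] {U W : Set M}
    (hU : IsOpen U) (hWc : IsCompact Wᶜ) (hUW : Uᶜ ⊆ W)
    (hnot : ∀ x ∈ U, ¬ connectedComponentIn U x ⊆ W) :
    {C : Set M | ∃ x ∈ U, C = connectedComponentIn U x}.Finite := by
  have hcover : Wᶜ ⊆ ⋃ x : U, connectedComponentIn U x := fun z hz =>
    have hzU : z ∈ U := not_not.mp (mt (@hUW z) hz)
    mem_iUnion.mpr ⟨⟨z, hzU⟩, mem_connectedComponentIn hzU⟩
  obtain ⟨t, ht⟩ := hWc.elim_finite_subcover _ (fun x => hU.connectedComponentIn) hcover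
  refine (Set.Finite.image (fun x : U => connectedComponentIn U x) t.finite_toSet).subset ?_
  rintro C ⟨y, hyU, rfl⟩
  obtain ⟨z, hzy, hzW⟩ := not_subset.mp (hnot y hyU)
  obtain ⟨w, hwt, hzw⟩ := mem_iUnion₂.mp (ht hzW)
  exact ⟨w, hwt, (connectedComponentIn_eq hzw).trans (connectedComponentIn_eq hzy).symm⟩

end LocallyConnected

theorem IsCutPair.mem_closure_connectedComponentIn {M : Type*} [TopologicalSpace M]
    [LocallyConnectedSpace M] [T1Space M] {ζ ξ : M} (h : IsCutPair M ζ ξ) {x : M}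
    (hx : x ∈ (({ζ, ξ} : Set M)ᶜ)) :
    ζ ∈ closure (connectedComponentIn (({ζ, ξ} : Set M)ᶜ) x) := by
  obtain ⟨hne, -, -, hξ⟩ := h
  have hξ' : IsPreconnected ({ξ}ᶜ : Set M) := not_not.mp hξ
  have hdiff : ({ξ}ᶜ : Set M) \ ({ζ, ξ} : Set M)ᶜ = {ζ} := by
    ext y
    simp only [mem_sdiff, mem_compl_iff, mem_singleton_iff, mem_insert_iff, not_not]
    constructor
    · rintro ⟨hyξ, hy | hy⟩
      exacts [hy, absurd hy hyξ]
    · rintro rfl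
      exact ⟨hne, Or.inl rfl⟩
  obtain ⟨p, hp, hpC⟩ := exists_mem_diff_mem_closure_connectedComponentIn hξ'
    (finite_singleton ξ |>.insert ζ).isClosed.isOpen_compl
    (compl_subset_compl.mpr (subset_insert ζ {ξ})) hx (hdiff ▸ singleton_nonempty ζ)
  rw [hdiff, mem_singleton_iff] at hp
  exact hp ▸ hpC

theorem IsCutPair.symm {M : Type*} [TopologicalSpace M] {ζ ξ : M} (h : IsCutPair M ζ ξ) :
    IsCutPair M ξ ζ := by
  obtain ⟨hne, hdisc, hζ, hξ⟩ := h
  exact ⟨hne.symm, pair_comm ζ ξ ▸ hdisc, hξ, hζ⟩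

theorem stmt13_general {M : Type*} [TopologicalSpace M] [CompactSpace M]
    [LocallyConnectedSpace M] [TopologicalSpace.MetrizableSpace M]
    (ζ ξ : M) (h : IsCutPair M ζ ξ) :
    {C : Set M | ∃ x ∈ (({ζ, ξ} : Set M)ᶜ),
        C = connectedComponentIn (({ζ, ξ} : Set M)ᶜ) x}.Finite ∧
    ∀ x ∈ (({ζ, ξ} : Set M)ᶜ),
      ζ ∈ closure (connectedComponentIn (({ζ, ξ} : Set M)ᶜ) x) ∧
      ξ ∈ closure (connectedComponentIn (({ζ, ξ} : Set M)ᶜ) x) := by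
  have hclosure : ∀ x ∈ (({ζ, ξ} : Set M)ᶜ),
      ζ ∈ closure (connectedComponentIn (({ζ, ξ} : Set M)ᶜ) x) ∧
      ξ ∈ closure (connectedComponentIn (({ζ, ξ} : Set M)ᶜ) x) := fun x hx =>
    ⟨h.mem_closure_connectedComponentIn hx,
      pair_comm ζ ξ ▸ h.symm.mem_closure_connectedComponentIn (pair_comm ζ ξ ▸ hx)⟩
  obtain ⟨A, B, hA, hB, hζA, hξB, hAB⟩ := t2_separation h.1
  refine ⟨finite_connectedComponentIn_of_not_subset
    (finite_singleton ξ |>.insert ζ).isClosed.isOpen_compl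
    (hA.union hB).isClosed_compl.isCompact ?_ fun x hx => ?_, hclosure⟩
  · rw [compl_compl]
    exact insert_subset (Or.inl hζA) (singleton_subset_iff.mpr (Or.inr hξB))
  · exact isPreconnected_connectedComponentIn.not_subset_union_of_mem_closure hA hB hAB
      hζA hξB (hclosure x hx).1 (hclosure x hx).2

/-- In a Peano continuum, a cut pair has only finitely many complementary components, and
both points of the pair lie in the closure of each component of the complement. -/
theorem stmt13 {M : Type*} [TopologicalSpace M] [CompactSpace M] [ConnectedSpace M]
    [LocallyConnectedSpace M] [TopologicalSpace.MetrizableSpace M]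
    (ζ ξ : M) (h : IsCutPair M ζ ξ) :
    {C : Set M | ∃ x ∈ (({ζ, ξ} : Set M)ᶜ),
        C = connectedComponentIn (({ζ, ξ} : Set M)ᶜ) x}.Finite ∧
    ∀ x ∈ (({ζ, ξ} : Set M)ᶜ),
      ζ ∈ closure (connectedComponentIn (({ζ, ξ} : Set M)ᶜ) x) ∧
      ξ ∈ closure (connectedComponentIn (({ζ, ξ} : Set M)ᶜ) x) :=
  stmt13_general ζ ξ h
end
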